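/- arXiv:1309.7659 — 9 statements merged into one kernel-verified Lean document; each statement's English description precedes it below -/
import Mathlib

section
/- Let X be a locally compact metric space, let φ : ℝ × X → X be a continuous flow on X, and let f₁, …, f_N : X → ℂ be continuous first integrals of φ, i.e. f_i(φ(t,x)) = f_i(x) for all t ∈ ℝ, x ∈ X. Set F = (f₁, …, f_N) : X → ℂ^N. If x₀ ∈ X is an isolated point of the level set F⁻¹({F(x₀)}), then x₀ is a fixed point of the flow (φ(t, x₀) = x₀ for all t ∈ ℝ) and x₀ is Lyapunov stable: for every neighborhood U of x₀ there exists a neighborhood V of x₀ such that φ(t, x) ∈ U for every x ∈ V and every t ∈ ℝ. -/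
/-- If `x₀` is an isolated point of the level set of the moment map
`F = (f₁, …, f_N)` built from continuous first integrals of a continuous flow `φ` on a
locally compact metric space, then `x₀` is a fixed point of the flow and is Lyapunov stable. -/
theorem statement0 {X : Type*} [MetricSpace X] [LocallyCompactSpace X]
    (φ : ℝ × X → X) (hφ : Continuous φ)
    (hzero : ∀ x : X, φ (0, x) = x)
    (hadd : ∀ (s t : ℝ) (x : X), φ (s, φ (t, x)) = φ (s + t, x))
    (N : ℕ) (f : Fin N → X → ℂ)
    (hf : ∀ i, Continuous (f i))
    (hint : ∀ (i : Fin N) (t : ℝ) (x : X), f i (φ (t, x)) = f i x)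
    (x₀ : X)
    (hiso : ∃ U ∈ nhds x₀, {x ∈ U | ∀ i, f i x = f i x₀} = {x₀}) :
    (∀ t : ℝ, φ (t, x₀) = x₀) ∧
      ∀ U ∈ nhds x₀, ∃ V ∈ nhds x₀, ∀ x ∈ V, ∀ t : ℝ, φ (t, x) ∈ U := by
  obtain ⟨U₀, hU₀, hlevel⟩ := hiso
  have hcont : ∀ x : X, Continuous fun t : ℝ => dist (φ (t, x)) x₀ := fun x =>
    (hφ.comp (continuous_id.prodMk continuous_const)).dist continuous_const
  -- key intermediate value argument
  have key : ∀ r : ℝ, 0 < r → ∀ x : X, dist x x₀ < r →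
      (∀ t : ℝ, dist (φ (t, x)) x₀ ≠ r) → ∀ t : ℝ, dist (φ (t, x)) x₀ < r := by
    intro r hr x hx hne t
    by_contra h
    push_neg at h
    have h0 : dist (φ (0, x)) x₀ < r := by rw [hzero]; exact hx
    have : r ∈ Set.range fun s : ℝ => dist (φ (s, x)) x₀ :=
      intermediate_value_univ 0 t (hcont x) ⟨h0.le, h⟩
    obtain ⟨s, hs⟩ := this
    exact hne s hs
  obtain ⟨r₀, hr₀, hball₀⟩ := Metric.nhds_basis_closedBall.mem_iff.mp hU₀
  have hfix : ∀ t : ℝ, φ (t, x₀) = x₀ := by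
    have hlev : ∀ t : ℝ, ∀ i, f i (φ (t, x₀)) = f i x₀ := fun t i => hint i t x₀
    have hne : ∀ s : ℝ, dist (φ (s, x₀)) x₀ ≠ r₀ := by
      intro s hsr
      have hmem : φ (s, x₀) ∈ U₀ := hball₀ (by simp [Metric.mem_closedBall, hsr.le])
      have h1 : φ (s, x₀) ∈ ({x₀} : Set X) := by
        rw [← hlevel]; exact ⟨hmem, hlev s⟩
      rw [Set.mem_singleton_iff] at h1
      rw [h1, dist_self] at hsr
      exact hr₀.ne hsr
    intro t
    have hlt := key r₀ hr₀ x₀ (by simpa using hr₀) hne t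
    have hmem : φ (t, x₀) ∈ U₀ := hball₀ (by exact hlt.le)
    have h1 : φ (t, x₀) ∈ ({x₀} : Set X) := by rw [← hlevel]; exact ⟨hmem, hlev t⟩
    exact h1
  refine ⟨hfix, ?_⟩
  intro U hU
  obtain ⟨K, hKc, hK⟩ := exists_compact_mem_nhds x₀
  have hUU : U ∩ U₀ ∩ K ∈ nhds x₀ := Filter.inter_mem (Filter.inter_mem hU hU₀) hK
  obtain ⟨r, hr, hball⟩ := Metric.nhds_basis_closedBall.mem_iff.mp hUU
  set g : X → ℝ := fun y => ∑ i, dist (f i y) (f i x₀) with hg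
  have hgc : Continuous g := continuous_finset_sum _ fun i _ => (hf i).dist continuous_const
  have hginv : ∀ (t : ℝ) (x : X), g (φ (t, x)) = g x := by
    intro t x; simp only [hg, hint]
  have hg0 : g x₀ = 0 := by simp [hg]
  have hgpos : ∀ y ∈ Metric.sphere x₀ r, 0 < g y := by
    intro y hy
    have hyb : y ∈ Metric.closedBall x₀ r := Metric.sphere_subset_closedBall hy
    have hymem : y ∈ U₀ := (hball hyb).1.2
    have hyne : y ≠ x₀ := by
      intro h; rw [Metric.mem_sphere, h, dist_self] at hy; exact hr.ne hy
    rcases lt_or_eq_of_le (Finset.sum_nonneg fun i _ => dist_nonneg : 0 ≤ g y) with h | h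
    · exact h
    · exfalso
      have hall : ∀ i, f i y = f i x₀ := by
        intro i
        have := (Finset.sum_eq_zero_iff_of_nonneg fun i _ => dist_nonneg).mp h.symm i
          (Finset.mem_univ i)
        exact dist_eq_zero.mp this
      have : y ∈ ({x₀} : Set X) := by rw [← hlevel]; exact ⟨hymem, hall⟩
      exact hyne this
  have hsc : IsCompact (Metric.sphere x₀ r) := by
    refine hKc.of_isClosed_subset Metric.isClosed_sphere ?_
    intro y hy
    exact (hball (Metric.sphere_subset_closedBall hy)).2
  -- build V
  rcases (Metric.sphere x₀ r).eq_empty_or_nonempty with hS | hS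
  · refine ⟨Metric.ball x₀ r, Metric.ball_mem_nhds x₀ hr, ?_⟩
    intro x hx t
    have hne : ∀ s : ℝ, dist (φ (s, x)) x₀ ≠ r := by
      intro s hs
      have : φ (s, x) ∈ Metric.sphere x₀ r := hs
      rw [hS] at this; exact this
    have hlt := key r hr x (Metric.mem_ball.mp hx) hne t
    exact (hball hlt.le).1.1
  · obtain ⟨y₀, hy₀, hmin⟩ := hsc.exists_isMinOn hS hgc.continuousOn
    set ε := g y₀ with hε
    have hεpos : 0 < ε := hgpos y₀ hy₀
    refine ⟨Metric.ball x₀ r ∩ g ⁻¹' Set.Iio ε, ?_, ?_⟩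
    · refine Filter.inter_mem (Metric.ball_mem_nhds x₀ hr) ?_
      exact hgc.continuousAt.preimage_mem_nhds (by rw [hg0]; exact Iio_mem_nhds hεpos)
    · rintro x ⟨hx1, hx2⟩ t
      have hne : ∀ s : ℝ, dist (φ (s, x)) x₀ ≠ r := by
        intro s hs
        have hmemS : φ (s, x) ∈ Metric.sphere x₀ r := hs
        have h2 : ε ≤ g x := by simpa [hginv] using hmin hmemS
        exact absurd (Set.mem_Iio.mp hx2) (not_lt.mpr h2)
      have hlt := key r hr x (Metric.mem_ball.mp hx1) hne t
      exact (hball hlt.le).1.1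
end

section
/- Let n ≥ 1 and let L : ℝ → ℂ → Matrix (Fin n) (Fin n) ℂ and A : ℝ → ℂ → Matrix (Fin n) (Fin n) ℂ be such that for every λ ∈ ℂ the map t ↦ L t λ is differentiable with derivative (d/dt)(L t λ) = (L t λ)·(A t λ) − (A t λ)·(L t λ). Then the spectral curve of L t is independent of t: for all t ∈ ℝ and all λ, μ ∈ ℂ, det(L t λ − μ·1) = det(L 0 λ − μ·1). -/
/-!
Jacobi's formula `(det M)' = tr (adj M · M')` turns the Lax equation `M' = [M, A]` into
`(det M)' = tr (adj M · M A) - tr (adj M · A M) = det M · tr A - det M · tr A = 0`, using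
`adj M · M = M · adj M = det M · 1` and cyclicity of the trace. Since `μ • 1` is central,
`L - μ • 1` satisfies the same Lax equation as `L`, so its determinant is constant in time.
-/

open Finset Equiv

namespace Matrix

variable {ι R : Type*} [Fintype ι] [DecidableEq ι] [CommRing R]

theorem trace_adjugate_mul (A B : Matrix ι ι R) :
    (adjugate A * B).trace = ∑ i, (A.updateCol i fun r => B r i).det := by
  simp only [← cramer_apply, cramer_eq_adjugate_mulVec, trace, diag, mul_apply, mulVec,
    dotProduct]

theorem trace_adjugate_mul_commutator (A B : Matrix ι ι R) :
    (adjugate A * (A * B - B * A)).trace = 0 := by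
  rw [mul_sub, trace_sub, ← mul_assoc, adjugate_mul, ← mul_assoc, trace_mul_comm _ A,
    ← mul_assoc, mul_adjugate, smul_mul, sub_self]

theorem det_updateCol_eq_sum (A : Matrix ι ι R) (i : ι) (v : ι → R) :
    (A.updateCol i v).det
      = ∑ σ : Perm ι, (Perm.sign σ : R) * ((∏ j ∈ univ.erase i, A (σ j) j) * v (σ i)) := by
  rw [det_apply']
  refine sum_congr rfl fun σ _ => ?_
  rw [← prod_erase_mul _ _ (mem_univ i), updateCol_self]
  congr 2
  exact prod_congr rfl fun j hj => updateCol_ne (ne_of_mem_erase hj)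

theorem hasDerivAt_det {𝕜 𝔸 : Type*} [NontriviallyNormedField 𝕜] [NormedCommRing 𝔸]
    [NormedAlgebra 𝕜 𝔸] {M : 𝕜 → Matrix ι ι 𝔸} {M' : Matrix ι ι 𝔸} {x : 𝕜}
    (h : ∀ i j, HasDerivAt (fun t => M t i j) (M' i j) x) :
    HasDerivAt (fun t => (M t).det) (adjugate (M x) * M').trace x := by
  have hsum := HasDerivAt.fun_sum fun σ (_ : σ ∈ (univ : Finset (Perm ι))) =>
    (HasDerivAt.fun_finsetProd fun i (_ : i ∈ univ) => h (σ i) i).const_mul (Perm.sign σ : 𝔸)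
  rw [show (fun t => (M t).det) = _ from funext fun t => det_apply' (M t)]
  refine hsum.congr_deriv ?_
  simp only [trace_adjugate_mul, det_updateCol_eq_sum, smul_eq_mul, mul_sum]
  exact sum_comm

theorem det_eq_of_hasDerivAt_commutator {𝕜 𝔸 : Type*} [RCLike 𝕜] [NormedCommRing 𝔸]
    [NormedAlgebra 𝕜 𝔸] {M A : 𝕜 → Matrix ι ι 𝔸}
    (h : ∀ t i j, HasDerivAt (fun s => M s i j) ((M t * A t - A t * M t) i j) t) (t s : 𝕜) :
    (M t).det = (M s).det := by
  have hdet (x : 𝕜) : HasDerivAt (fun s => (M s).det) 0 x := by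
    simpa only [trace_adjugate_mul_commutator] using hasDerivAt_det (h x)
  exact is_const_of_deriv_eq_zero (fun x => (hdet x).differentiableAt) (fun x => (hdet x).deriv)
    t s

end Matrix

theorem statement1_general (n : ℕ)
    (L A : ℝ → ℂ → Matrix (Fin n) (Fin n) ℂ)
    (hLax : ∀ (lam : ℂ) (t : ℝ) (i j : Fin n),
      HasDerivAt (fun s : ℝ => L s lam i j)
        ((L t lam * A t lam - A t lam * L t lam) i j) t)
    (t : ℝ) (lam μ : ℂ) :
    (L t lam - μ • (1 : Matrix (Fin n) (Fin n) ℂ)).det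
      = (L 0 lam - μ • (1 : Matrix (Fin n) (Fin n) ℂ)).det := by
  set M : ℝ → Matrix (Fin n) (Fin n) ℂ := fun s => L s lam - μ • 1
  have hcomm (x : ℝ) : M x * A x lam - A x lam * M x = L x lam * A x lam - A x lam * L x lam := by
    simp only [M, sub_mul, mul_sub, Matrix.smul_mul, Matrix.mul_smul, Matrix.one_mul,
      Matrix.mul_one]
    abel
  refine Matrix.det_eq_of_hasDerivAt_commutator (M := M) (A := fun s => A s lam)
    (fun x i j => ?_) t 0
  rw [hcomm x]
  exact (hLax lam x i j).sub_const _

/-- The spectral curve `det(L_λ − μ·1) = 0` is preserved by a Lax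
equation `dL_λ/dt = [L_λ, A_λ]` with spectral parameter. -/
theorem statement1 (n : ℕ) (hn : 1 ≤ n)
    (L A : ℝ → ℂ → Matrix (Fin n) (Fin n) ℂ)
    (hLax : ∀ (lam : ℂ) (t : ℝ) (i j : Fin n),
      HasDerivAt (fun s : ℝ => L s lam i j)
        ((L t lam * A t lam - A t lam * L t lam) i j) t)
    (t : ℝ) (lam μ : ℂ) :
    (L t lam - μ • (1 : Matrix (Fin n) (Fin n) ℂ)).det
      = (L 0 lam - μ • (1 : Matrix (Fin n) (Fin n) ℂ)).det :=
  statement1_general n L A hLax t lam μ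
end

section
/- Let n ≥ 1 and let L : ℂ → Matrix (Fin n) (Fin n) ℂ have entries that are analytic functions of λ. Suppose λ, μ : ℂ → ℂ and h : ℂ → (Fin n → ℂ) are analytic on a neighborhood of 0 ∈ ℂ and satisfy (L(λ(z)))(h(z)) = μ(z) • h(z) for all z near 0, with λ'(0) = 0, μ'(0) ≠ 0, and h(0) ≠ 0. Then (L(λ(0)) − μ(0)·1)(h'(0)) = μ'(0) • h(0). In particular the vector v = h'(0) satisfies (L(λ(0)) − μ(0)·1) v ≠ 0 and (L(λ(0)) − μ(0)·1)² v = 0, so the matrix L(λ(0)) has a non-trivial Jordan block with eigenvalue μ(0), with generalized eigenvector h'(0). -/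
/-!
Differentiating `L(λ(z)) h(z) = μ(z) h(z)` at `0` gives
`L(λ(0)) h'(0) + (L ∘ λ)'(0) h(0) = μ'(0) h(0) + μ(0) h'(0)`, and `(L ∘ λ)'(0) = 0` by the chain
rule since `λ'(0) = 0`. Hence `L(λ(0)) − μ(0)` sends `h'(0)` to `μ'(0) h(0)`, a nonzero
eigenvector, which it sends to `0`.
-/

open Matrix

section HasDerivAt

variable {𝕜 : Type*} [NontriviallyNormedField 𝕜] {m n : Type*} [Fintype n]

theorem hasDerivAt_mulVec {A : 𝕜 → Matrix m n 𝕜} {A' : Matrix m n 𝕜}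
    {v : 𝕜 → n → 𝕜} {v' : n → 𝕜} {x : 𝕜}
    (hA : ∀ i j, HasDerivAt (fun z => A z i j) (A' i j) x) (hv : HasDerivAt v v' x) :
    HasDerivAt (fun z => A z *ᵥ v z) (A' *ᵥ v x + A x *ᵥ v') x := by
  refine hasDerivAt_pi.mpr fun i => ?_
  convert HasDerivAt.fun_sum (u := Finset.univ) fun j _ =>
    (hA i j).fun_mul (hasDerivAt_pi.mp hv j) using 1
  all_goals simp only [Pi.add_apply, mulVec, dotProduct, Finset.sum_add_distrib]

theorem sub_smul_one_mulVec_of_hasDerivAt_eigen [DecidableEq n] {A : 𝕜 → Matrix n n 𝕜}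
    {A' : Matrix n n 𝕜} {v : 𝕜 → n → 𝕜} {v' : n → 𝕜} {μ : 𝕜 → 𝕜} {μ' x : 𝕜}
    (hA : ∀ i j, HasDerivAt (fun z => A z i j) (A' i j) x) (hv : HasDerivAt v v' x)
    (hμ : HasDerivAt μ μ' x) (hAv : ∀ᶠ z in nhds x, A z *ᵥ v z = μ z • v z) :
    (A x - μ x • 1) *ᵥ v' = μ' • v x - A' *ᵥ v x := by
  have hderiv := ((hasDerivAt_mulVec hA hv).congr_of_eventuallyEq
    (Filter.EventuallyEq.symm hAv)).unique (hμ.fun_smul hv)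
  rw [sub_mulVec, smul_mulVec, one_mulVec]
  linear_combination hderiv

end HasDerivAt

theorem statement3_general (n : ℕ)
    (L : ℂ → Matrix (Fin n) (Fin n) ℂ)
    (hL : ∀ (i j : Fin n) (z : ℂ), AnalyticAt ℂ (fun w => L w i j) z)
    (lam mu : ℂ → ℂ) (h : ℂ → Fin n → ℂ)
    (hlam : AnalyticAt ℂ lam 0) (hmu : AnalyticAt ℂ mu 0) (hh : AnalyticAt ℂ h 0)
    (heq : ∀ᶠ z in nhds (0 : ℂ), (L (lam z)).mulVec (h z) = mu z • h z)
    (hlam' : deriv lam 0 = 0) (hmu' : deriv mu 0 ≠ 0) (hh0 : h 0 ≠ 0) :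
    (L (lam 0) - mu 0 • 1).mulVec (deriv h 0) = deriv mu 0 • h 0 ∧
      (L (lam 0) - mu 0 • 1).mulVec (deriv h 0) ≠ 0 ∧
      (L (lam 0) - mu 0 • 1).mulVec ((L (lam 0) - mu 0 • 1).mulVec (deriv h 0)) = 0 := by
  have hlam₀ : HasDerivAt lam 0 0 := by simpa only [hlam'] using hlam.differentiableAt.hasDerivAt
  have hLlam : ∀ i j, HasDerivAt (fun z => L (lam z) i j) 0 0 := fun i j => by
    have hcomp := (hL i j (lam 0)).differentiableAt.hasDerivAt.comp 0 hlam₀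
    rwa [mul_zero] at hcomp
  have hchain : (L (lam 0) - mu 0 • 1) *ᵥ deriv h 0 = deriv mu 0 • h 0 := by
    simpa using sub_smul_one_mulVec_of_hasDerivAt_eigen (A' := 0) hLlam
      hh.differentiableAt.hasDerivAt hmu.differentiableAt.hasDerivAt heq
  have heigen : (L (lam 0) - mu 0 • 1) *ᵥ h 0 = 0 := by
    rw [sub_mulVec, heq.self_of_nhds, smul_mulVec, one_mulVec, sub_self]
  refine ⟨hchain, ?_, ?_⟩
  · rw [hchain]
    exact smul_ne_zero hmu' hh0
  · rw [hchain, mulVec_smul, heigen, smul_zero]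

/-- If `(L(λ(z)))h(z) = μ(z)h(z)` with `λ, μ, h` analytic near `0`,
`λ'(0) = 0`, `μ'(0) ≠ 0` and `h(0) ≠ 0`, then `(L(λ(0)) − μ(0))h'(0) = μ'(0)h(0)`;
in particular `v = h'(0)` satisfies `(L(λ(0)) − μ(0))v ≠ 0` and `(L(λ(0)) − μ(0))²v = 0`,
i.e. `L(λ(0))` has a non-trivial Jordan block with eigenvalue `μ(0)` and generalized
eigenvector `h'(0)`. -/
theorem statement3 (n : ℕ) (hn : 1 ≤ n)
    (L : ℂ → Matrix (Fin n) (Fin n) ℂ)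
    (hL : ∀ (i j : Fin n) (z : ℂ), AnalyticAt ℂ (fun w => L w i j) z)
    (lam mu : ℂ → ℂ) (h : ℂ → Fin n → ℂ)
    (hlam : AnalyticAt ℂ lam 0) (hmu : AnalyticAt ℂ mu 0) (hh : AnalyticAt ℂ h 0)
    (heq : ∀ᶠ z in nhds (0 : ℂ), (L (lam z)).mulVec (h z) = mu z • h z)
    (hlam' : deriv lam 0 = 0) (hmu' : deriv mu 0 ≠ 0) (hh0 : h 0 ≠ 0) :
    (L (lam 0) - mu 0 • 1).mulVec (deriv h 0) = deriv mu 0 • h 0 ∧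
      (L (lam 0) - mu 0 • 1).mulVec (deriv h 0) ≠ 0 ∧
      (L (lam 0) - mu 0 • 1).mulVec ((L (lam 0) - mu 0 • 1).mulVec (deriv h 0)) = 0 :=
  statement3_general n L hL lam mu h hlam hmu hh heq hlam' hmu' hh0
end

section
/- Let n ≥ 1, σ ∈ ℂ with |σ| = 1, and ε ∈ {1, −1}. Let L⁰, L : ℂ → Matrix (Fin n) (Fin n) ℂ have polynomial entries and both satisfy the reality condition L(ε·conj(λ)) = σ·(L(λ))ᴴ for all λ ∈ ℂ, where ᴴ denotes conjugate transpose. Suppose Q is an invertible complex n×n matrix such that L(λ) = Q⁻¹·L⁰(λ)·Q for all λ ∈ ℂ. Then the matrix Q·Qᴴ commutes with L⁰(λ) for every λ ∈ ℂ. -/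
open Matrix

theorem Matrix.commute_mul_of_inv_mul_mul_eq {n α : Type*} [Fintype n] [DecidableEq n]
    [CommRing α] {P R A : Matrix n n α} (hP : IsUnit P.det) (hR : IsUnit R.det)
    (h : P⁻¹ * A * P = R * A * R⁻¹) : Commute (P * R) A :=
  calc P * R * A = P * (R * A * R⁻¹) * R := by simp [Matrix.mul_assoc, hR]
    _ = P * (P⁻¹ * A * P) * R := by rw [h]
    _ = A * (P * R) := by simp [← Matrix.mul_assoc, hP]

section RealityCondition

variable {X 𝕜 n : Type*} [Field 𝕜] [StarRing 𝕜] [Fintype n] [DecidableEq n]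
  {τ : X → X} {σ : 𝕜} {L₀ L : X → Matrix n n 𝕜} {Q : Matrix n n 𝕜}

/-- Conjugating the reality condition of `L₀` by `Q` and comparing it with that of `L` gives
`Q⁻¹ L₀ᴴ Q = Qᴴ L₀ᴴ Qᴴ⁻¹`. -/
theorem Matrix.commute_mul_conjTranspose_conjTranspose_of_reality (hσ : σ ≠ 0)
    (hreal₀ : ∀ x, L₀ (τ x) = σ • (L₀ x)ᴴ) (hreal : ∀ x, L (τ x) = σ • (L x)ᴴ)
    (hQ : IsUnit Q.det) (hconj : ∀ x, L x = Q⁻¹ * L₀ x * Q) (x : X) :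
    Commute (Q * Qᴴ) (L₀ x)ᴴ := by
  have hQH : IsUnit Qᴴ.det := by
    rw [det_conjTranspose]
    exact hQ.star
  refine commute_mul_of_inv_mul_mul_eq hQ hQH (smul_right_injective _ hσ ?_)
  have h := hreal x
  rw [hconj, hconj, hreal₀, conjTranspose_mul, conjTranspose_mul, conjTranspose_nonsing_inv]
    at h
  simpa only [Matrix.mul_smul, Matrix.smul_mul, Matrix.mul_assoc] using h

theorem Matrix.commute_mul_conjTranspose_of_reality (hτ : Function.Involutive τ)
    (hσ : σ ≠ 0) (hreal₀ : ∀ x, L₀ (τ x) = σ • (L₀ x)ᴴ)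
    (hreal : ∀ x, L (τ x) = σ • (L x)ᴴ) (hQ : IsUnit Q.det)
    (hconj : ∀ x, L x = Q⁻¹ * L₀ x * Q) (x : X) :
    Commute (Q * Qᴴ) (L₀ x) := by
  rw [← hτ x, hreal₀]
  exact .smul_right
    (commute_mul_conjTranspose_conjTranspose_of_reality hσ hreal₀ hreal hQ hconj _) σ

end RealityCondition

theorem Complex.involutive_ofReal_mul_conj {ε : ℝ} (hε : ε = 1 ∨ ε = -1) :
    Function.Involutive fun z : ℂ => (ε : ℂ) * (starRingEnd ℂ) z := by
  intro z
  rcases hε with rfl | rfl <;> simp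

theorem statement5_general (n : ℕ) (σ : ℂ) (hσ : ‖σ‖ = 1)
    (ε : ℝ) (hε : ε = 1 ∨ ε = -1)
    (L₀ L : ℂ → Matrix (Fin n) (Fin n) ℂ)
    (hreal₀ : ∀ z : ℂ, L₀ ((ε : ℂ) * (starRingEnd ℂ) z) = σ • (L₀ z)ᴴ)
    (hreal : ∀ z : ℂ, L ((ε : ℂ) * (starRingEnd ℂ) z) = σ • (L z)ᴴ)
    (Q : Matrix (Fin n) (Fin n) ℂ) (hQ : IsUnit Q)
    (hconj : ∀ z : ℂ, L z = Q⁻¹ * L₀ z * Q) :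
    ∀ z : ℂ, Q * Qᴴ * L₀ z = L₀ z * (Q * Qᴴ) := by
  have hσ0 : σ ≠ 0 := by
    rintro rfl
    simp at hσ
  intro z
  exact (commute_mul_conjTranspose_of_reality (τ := fun z => (ε : ℂ) * (starRingEnd ℂ) z)
    (Complex.involutive_ofReal_mul_conj hε) hσ0 hreal₀ hreal
    ((isUnit_iff_isUnit_det Q).mp hQ) hconj z).eq

/-- If two matrix polynomials `L⁰, L` satisfying the reality condition
`L(ε·conj λ) = σ·L(λ)ᴴ` are conjugate by an invertible matrix `Q`, then `Q·Qᴴ` commutes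
with `L⁰(λ)` for every `λ`. -/
theorem statement5 (n : ℕ) (hn : 1 ≤ n) (σ : ℂ) (hσ : ‖σ‖ = 1)
    (ε : ℝ) (hε : ε = 1 ∨ ε = -1)
    (L₀ L : ℂ → Matrix (Fin n) (Fin n) ℂ)
    (hpoly₀ : ∀ i j : Fin n, ∃ p : Polynomial ℂ, ∀ z : ℂ, L₀ z i j = p.eval z)
    (hpoly : ∀ i j : Fin n, ∃ p : Polynomial ℂ, ∀ z : ℂ, L z i j = p.eval z)
    (hreal₀ : ∀ z : ℂ, L₀ ((ε : ℂ) * (starRingEnd ℂ) z) = σ • (L₀ z)ᴴ)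
    (hreal : ∀ z : ℂ, L ((ε : ℂ) * (starRingEnd ℂ) z) = σ • (L z)ᴴ)
    (Q : Matrix (Fin n) (Fin n) ℂ) (hQ : IsUnit Q)
    (hconj : ∀ z : ℂ, L z = Q⁻¹ * L₀ z * Q) :
    ∀ z : ℂ, Q * Qᴴ * L₀ z = L₀ z * (Q * Qᴴ) :=
  statement5_general n σ hσ ε hε L₀ L hreal₀ hreal Q hQ hconj
end

section
/- Let n ≥ 1. Let A ∈ Matrix (Fin n) (Fin n) ℂ be skew-Hermitian (Aᴴ = −A) with n distinct eigenvalues, and let B be skew-Hermitian with A·B = B·A. Let φ be an ℝ-linear map from the real vector space of skew-Hermitian n×n matrices to itself satisfying φ(X)·A − A·φ(X) = X·B − B·X for every skew-Hermitian X. Let X₀ be skew-Hermitian with X₀·A = A·X₀. Then X₀ is an equilibrium of the Mishchenko–Fomenko equation Ẋ = [X, φ(X)] (i.e. [X₀, φ(X₀)] = 0) and is Lyapunov stable: for every ε > 0 there exists δ > 0 such that every differentiable curve X : I → Matrix (Fin n) (Fin n) ℂ with skew-Hermitian values, defined on an interval I containing 0, satisfying X'(t) = X(t)·φ(X(t)) −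 φ(X(t))·X(t) for all t ∈ I and ‖X(0) − X₀‖ < δ, satisfies ‖X(t) − X₀‖ < ε for all t ∈ I with t ≥ 0. -/
open Matrix

attribute [local instance] Matrix.normedAddCommGroup Matrix.normedSpace

/-!
In an eigenbasis of `A` the simple spectrum makes every matrix commuting with `A` diagonal, so
`X₀`, `B` and `φ X₀` are diagonal there and `X₀` is an equilibrium. The same eigenbasis turns the
sectional relation `⁅φ W, A⁆ = ⁅W, B⁆` into `(φ W)ᵢⱼ (μⱼ - μᵢ) = Wᵢⱼ (bⱼ - bᵢ)`, which makes
`Wᵢⱼ (φ W)ⱼᵢ` symmetric in `i, j`; hence `⁅W, φ W⁆` has zero diagonal and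
`tr (⁅W, φ W⁆ X₀) = 0`. Together with `tr (⁅W, φ W⁆ W) = 0` this shows that
`tr ((X - X₀)²) = -∑ |(X - X₀)ᵢⱼ|²` is a first integral, and comparing this Frobenius norm with
the entrywise sup norm gives stability.
-/

theorem Convex.eq_of_hasDerivWithinAt_eq_zero {E : Type*} [NormedAddCommGroup E]
    [NormedSpace ℝ E] {f : ℝ → E} {s : Set ℝ} (hs : Convex ℝ s)
    (hf : ∀ x ∈ s, HasDerivWithinAt f 0 s x) {x y : ℝ} (hx : x ∈ s) (hy : y ∈ s) :
    f y = f x := by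
  have := hs.norm_image_sub_le_of_norm_hasDerivWithin_le hf (fun _ _ => norm_zero.le) hx hy
  rwa [zero_mul, norm_le_zero_iff, sub_eq_zero] at this

theorem HasDerivWithinAt.trace_mul {ι 𝕜 𝔸 : Type*} [Fintype ι] [NontriviallyNormedField 𝕜]
    [NormedCommRing 𝔸] [NormedAlgebra 𝕜 𝔸] {Y Z : 𝕜 → Matrix ι ι 𝔸} {Y' Z' : Matrix ι ι 𝔸}
    {s : Set 𝕜} {t : 𝕜} (hY : HasDerivWithinAt Y Y' s t) (hZ : HasDerivWithinAt Z Z' s t) :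
    HasDerivWithinAt (fun t => trace (Y t * Z t)) (trace (Y' * Z t) + trace (Y t * Z')) s t := by
  have hentry {Y : 𝕜 → Matrix ι ι 𝔸} {Y'} (hY : HasDerivWithinAt Y Y' s t) (i j : ι) :
      HasDerivWithinAt (fun t => Y t i j) (Y' i j) s t :=
    hasDerivWithinAt_pi.1 (hasDerivWithinAt_pi.1 hY i) j
  simp only [trace, diag_apply, mul_apply, ← Finset.sum_add_distrib]
  exact HasDerivWithinAt.fun_sum fun i _ => HasDerivWithinAt.fun_sum fun j _ =>
    (hentry hY i j).mul (hentry hZ j i)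

namespace Matrix

section Commutant

variable {ι R : Type*} [Fintype ι] [DecidableEq ι] [CommRing R] [IsDomain R]

theorem isDiag_of_commute_diagonal {μ : ι → R} (hμ : Function.Injective μ) {M : Matrix ι ι R}
    (h : Commute M (diagonal μ)) : M.IsDiag := by
  intro i j hij
  have hij' : M i j * (μ j - μ i) = 0 := by
    have := congr_fun₂ h.eq i j
    rw [mul_diagonal, diagonal_mul] at this
    linear_combination this
  exact (mul_eq_zero.1 hij').resolve_right (sub_ne_zero.2 (hμ.ne hij).symm)

theorem diag_commutator_eq_zero_of_sectional {μ b : ι → R} (hμ : Function.Injective μ)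
    {W C : Matrix ι ι R}
    (h : C * diagonal μ - diagonal μ * C = W * diagonal b - diagonal b * W) :
    (W * C - C * W).diag = 0 := by
  have hentry (i j : ι) : C i j * (μ j - μ i) = W i j * (b j - b i) := by
    have := congr_fun₂ h i j
    simp only [sub_apply, mul_diagonal, diagonal_mul] at this
    linear_combination this
  have hsymm (i j : ι) : W i j * C j i = C i j * W j i := by
    obtain rfl | hij := eq_or_ne i j
    · ring
    refine mul_left_cancel₀ (sub_ne_zero.2 (hμ.ne hij)) ?_
    linear_combination W i j * hentry j i + W j i * hentry i j
  ext i
  simp [sub_apply, mul_apply, hsymm]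

end Commutant

section SimpleSpectrum

variable {ι K : Type*} [Fintype ι] [DecidableEq ι] [Field K]

theorem exists_units_inv_mul_mul_eq_diagonal {A : Matrix ι ι K} {μ : ι → K}
    (hμ : Function.Injective μ)
    (hA : A.charpoly = ∏ i, (Polynomial.X - Polynomial.C (μ i))) :
    ∃ P : (Matrix ι ι K)ˣ, (↑P⁻¹ : Matrix ι ι K) * A * P = diagonal μ := by
  have hroot (i : ι) : Module.End.HasEigenvalue (toLin' A) (μ i) := by
    rw [Module.End.hasEigenvalue_iff_isRoot_charpoly, charpoly_toLin', hA,
      Polynomial.IsRoot, Polynomial.eval_prod]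
    exact Finset.prod_eq_zero (Finset.mem_univ i) (by simp)
  choose v hv using fun i => (hroot i).exists_hasEigenvector
  have hAv (i : ι) : A *ᵥ v i = μ i • v i := by
    simpa using Module.End.mem_eigenspace_iff.1 (hv i).1
  obtain ⟨P, hP⟩ : IsUnit (of v)ᵀ := linearIndependent_cols_iff_isUnit.1
    (Module.End.eigenvectors_linearIndependent' (toLin' A) μ hμ v hv)
  refine ⟨P, ?_⟩
  have hAP : A * P = P * diagonal μ := by
    ext a i
    have := congr_fun (hAv i) a
    simp only [mulVec, dotProduct, Pi.smul_apply, smul_eq_mul] at this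
    rw [hP, mul_diagonal, mul_apply]
    simpa [mul_comm] using this
  rw [mul_assoc, hAP, ← mul_assoc, Units.inv_mul, one_mul]

theorem exists_ringEquiv_eq_diagonal {A : Matrix ι ι K} {μ : ι → K} (hμ : Function.Injective μ)
    (hA : A.charpoly = ∏ i, (Polynomial.X - Polynomial.C (μ i))) :
    ∃ σ : Matrix ι ι K ≃+* Matrix ι ι K, σ A = diagonal μ ∧ ∀ M, trace (σ M) = trace M := by
  obtain ⟨P, hP⟩ := exists_units_inv_mul_mul_eq_diagonal hμ hA
  let σ := MulSemiringAction.toRingEquiv (ConjAct (Matrix ι ι K)ˣ) (Matrix ι ι K)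
    (ConjAct.toConjAct P⁻¹)
  have hσ (M : Matrix ι ι K) : σ M = (↑P⁻¹ : Matrix ι ι K) * M * P := by
    simp [σ, ConjAct.units_smul_def]
  refine ⟨σ, by rw [hσ, hP], fun M => ?_⟩
  rw [hσ, trace_mul_cycle, Units.mul_inv, one_mul]

theorem eq_diagonal_diag_of_commute {A : Matrix ι ι K} {μ : ι → K} (hμ : Function.Injective μ)
    {σ : Matrix ι ι K ≃+* Matrix ι ι K} (hσ : σ A = diagonal μ) {M : Matrix ι ι K}
    (hM : Commute M A) : σ M = diagonal (σ M).diag :=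
  (isDiag_of_commute_diagonal hμ (hσ ▸ hM.map σ)).diagonal_diag.symm

theorem commute_of_commute_of_charpoly_eq_prod {A : Matrix ι ι K} {μ : ι → K}
    (hμ : Function.Injective μ)
    (hA : A.charpoly = ∏ i, (Polynomial.X - Polynomial.C (μ i)))
    {M N : Matrix ι ι K} (hM : Commute M A) (hN : Commute N A) : Commute M N := by
  obtain ⟨σ, hσ, -⟩ := exists_ringEquiv_eq_diagonal hμ hA
  have hdiag : Commute (σ M) (σ N) := by
    rw [eq_diagonal_diag_of_commute hμ hσ hM, eq_diagonal_diag_of_commute hμ hσ hN]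
    exact commute_diagonal _ _
  simpa using hdiag.map σ.symm

theorem trace_commutator_mul_eq_zero_of_sectional {A B X₀ W C : Matrix ι ι K} {μ : ι → K}
    (hμ : Function.Injective μ)
    (hA : A.charpoly = ∏ i, (Polynomial.X - Polynomial.C (μ i)))
    (hB : Commute B A) (hX₀ : Commute X₀ A) (h : C * A - A * C = W * B - B * W) :
    trace ((W * C - C * W) * X₀) = 0 := by
  obtain ⟨σ, hσ, hσtr⟩ := exists_ringEquiv_eq_diagonal hμ hA
  have hσh : σ C * diagonal μ - diagonal μ * σ C
      = σ W * diagonal (σ B).diag - diagonal (σ B).diag * σ W := by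
    rw [← hσ, ← eq_diagonal_diag_of_commute hμ hσ hB]
    simpa only [map_sub, map_mul] using congr_arg σ h
  have hzero := diag_commutator_eq_zero_of_sectional hμ hσh
  rw [← hσtr, map_mul, map_sub, map_mul, map_mul, eq_diagonal_diag_of_commute hμ hσ hX₀]
  simp only [trace, diag_apply, mul_diagonal]
  refine Finset.sum_eq_zero fun i _ => ?_
  rw [← diag_apply (σ W * σ C - σ C * σ W), hzero, Pi.zero_apply, zero_mul]

end SimpleSpectrum

section Norms

variable {ι : Type*} [Fintype ι]

theorem trace_mul_self_of_conjTranspose_eq_neg {Y : Matrix ι ι ℂ} (hY : Yᴴ = -Y) :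
    trace (Y * Y) = -((∑ i, ∑ j, ‖Y i j‖ ^ 2 : ℝ) : ℂ) := by
  have hent (i j : ι) : Y i j * Y j i = -((‖Y i j‖ : ℂ) ^ 2) := by
    have : star (Y i j) = -Y j i := by simpa using congr_fun₂ hY j i
    rw [← Complex.mul_conj', ← Complex.star_def, this, mul_neg, neg_neg]
  push_cast
  simp only [trace, diag_apply, mul_apply, hent, Finset.sum_neg_distrib]

variable {κ α : Type*} [Fintype κ] [NormedAddCommGroup α]

theorem norm_sq_le_sum_norm_sq (Y : Matrix ι κ α) : ‖Y‖ ^ 2 ≤ ∑ i, ∑ j, ‖Y i j‖ ^ 2 := by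
  refine (Real.le_sqrt (norm_nonneg Y) (by positivity)).1
    ((norm_le_iff (Real.sqrt_nonneg _)).2 fun i j => Real.le_sqrt_of_sq_le ?_)
  calc ‖Y i j‖ ^ 2 ≤ ∑ j, ‖Y i j‖ ^ 2 :=
        Finset.single_le_sum (f := fun j => ‖Y i j‖ ^ 2) (fun _ _ => by positivity)
          (Finset.mem_univ j)
    _ ≤ ∑ i, ∑ j, ‖Y i j‖ ^ 2 :=
        Finset.single_le_sum (f := fun i => ∑ j, ‖Y i j‖ ^ 2) (fun _ _ => by positivity)
          (Finset.mem_univ i)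

theorem sum_norm_sq_le (Y : Matrix ι κ α) :
    ∑ i, ∑ j, ‖Y i j‖ ^ 2 ≤ Fintype.card ι * Fintype.card κ * ‖Y‖ ^ 2 := by
  calc ∑ i, ∑ j, ‖Y i j‖ ^ 2 ≤ ∑ _i : ι, ∑ _j : κ, ‖Y‖ ^ 2 := by
        gcongr with i _ j _
        exact norm_entry_le_entrywise_sup_norm Y
    _ = _ := by simp [mul_assoc]

theorem norm_le_card_mul_norm_of_sum_norm_sq_eq {Y Z : Matrix ι ι α}
    (h : ∑ i, ∑ j, ‖Y i j‖ ^ 2 = ∑ i, ∑ j, ‖Z i j‖ ^ 2) : ‖Y‖ ≤ Fintype.card ι * ‖Z‖ := by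
  refine le_of_pow_le_pow_left₀ two_ne_zero (by positivity) ?_
  calc ‖Y‖ ^ 2 ≤ ∑ i, ∑ j, ‖Z i j‖ ^ 2 := h ▸ norm_sq_le_sum_norm_sq Y
    _ ≤ Fintype.card ι * Fintype.card ι * ‖Z‖ ^ 2 := sum_norm_sq_le Z
    _ = (Fintype.card ι * ‖Z‖) ^ 2 := by ring

end Norms

end Matrix

theorem statement8_general (n : ℕ)
    (A B : Matrix (Fin n) (Fin n) ℂ)
    (hAB : A * B = B * A)
    (hsimple : ∃ μs : Fin n → ℂ, Function.Injective μs ∧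
      A.charpoly = ∏ i : Fin n, (Polynomial.X - Polynomial.C (μs i)))
    (φ : Matrix (Fin n) (Fin n) ℂ → Matrix (Fin n) (Fin n) ℂ)
    (hφsec : ∀ X : Matrix (Fin n) (Fin n) ℂ, Xᴴ = -X →
      φ X * A - A * φ X = X * B - B * X)
    (X₀ : Matrix (Fin n) (Fin n) ℂ) (hX₀ : X₀ᴴ = -X₀) (hX₀A : X₀ * A = A * X₀) :
    X₀ * φ X₀ - φ X₀ * X₀ = 0 ∧
      ∀ ε > (0 : ℝ), ∃ δ > (0 : ℝ),
        ∀ (I : Set ℝ) (X : ℝ → Matrix (Fin n) (Fin n) ℂ),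
          I.OrdConnected → (0 : ℝ) ∈ I →
          (∀ t ∈ I, (X t)ᴴ = -(X t)) →
          (∀ t ∈ I, HasDerivWithinAt X (X t * φ (X t) - φ (X t) * X t) I t) →
          ‖X 0 - X₀‖ < δ →
          ∀ t ∈ I, 0 ≤ t → ‖X t - X₀‖ < ε := by
  obtain ⟨μ, hμ, hA⟩ := hsimple
  have hX₀B : X₀ * B = B * X₀ := commute_of_commute_of_charpoly_eq_prod hμ hA hX₀A hAB.symm
  have hφX₀A : φ X₀ * A = A * φ X₀ := by
    simpa [hX₀B, sub_eq_zero] using hφsec X₀ hX₀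
  refine ⟨sub_eq_zero.2 (commute_of_commute_of_charpoly_eq_prod hμ hA hX₀A hφX₀A),
    fun ε hε => ⟨ε / (n + 1), by positivity, ?_⟩⟩
  intro I X hI h0 hskew hderiv hδ t ht _
  have hconst : trace ((X t - X₀) * (X t - X₀)) = trace ((X 0 - X₀) * (X 0 - X₀)) := by
    refine hI.convex.eq_of_hasDerivWithinAt_eq_zero
      (f := fun s => trace ((X s - X₀) * (X s - X₀))) (fun s hs => ?_) h0 ht
    refine (((hderiv s hs).sub_const X₀).trace_mul ((hderiv s hs).sub_const X₀)).congr_deriv ?_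
    have hflow : trace ((X s * φ (X s) - φ (X s) * X s) * X s) = 0 := by
      rw [sub_mul, trace_sub, mul_assoc, trace_mul_comm (X s), sub_self]
    have hX₀ : trace ((X s * φ (X s) - φ (X s) * X s) * X₀) = 0 :=
      trace_commutator_mul_eq_zero_of_sectional hμ hA hAB.symm hX₀A (hφsec _ (hskew s hs))
    rw [trace_mul_comm (X s - X₀), mul_sub, trace_sub, hflow, hX₀]
    ring
  have hskewSub {s} (hs : s ∈ I) : (X s - X₀)ᴴ = -(X s - X₀) := by
    rw [conjTranspose_sub, hskew s hs, hX₀, neg_sub_neg, neg_sub]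
  rw [trace_mul_self_of_conjTranspose_eq_neg (hskewSub ht),
    trace_mul_self_of_conjTranspose_eq_neg (hskewSub h0), neg_inj, Complex.ofReal_inj] at hconst
  calc ‖X t - X₀‖ ≤ n * ‖X 0 - X₀‖ := by
        simpa using norm_le_card_mul_norm_of_sum_norm_sq_eq hconst
    _ ≤ (n + 1) * ‖X 0 - X₀‖ := by gcongr; linarith
    _ < ε := by rwa [lt_div_iff₀' (by positivity)] at hδ

/-- An equilibrium `X₀ ∈ 𝔠(A)` of the Mishchenko–Fomenko top on `𝔲(n)`
(defined by a sectional operator `φ` with `⁅φ(X), A⁆ = ⁅X, B⁆`, where `A` is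
skew-Hermitian with simple spectrum and `B` is skew-Hermitian commuting with `A`)
is Lyapunov stable. -/
theorem statement8 (n : ℕ) (hn : 1 ≤ n)
    (A B : Matrix (Fin n) (Fin n) ℂ)
    (hA : Aᴴ = -A) (hB : Bᴴ = -B) (hAB : A * B = B * A)
    (hsimple : ∃ μs : Fin n → ℂ, Function.Injective μs ∧
      A.charpoly = ∏ i : Fin n, (Polynomial.X - Polynomial.C (μs i)))
    (φ : Matrix (Fin n) (Fin n) ℂ → Matrix (Fin n) (Fin n) ℂ)
    (hφadd : ∀ X Y : Matrix (Fin n) (Fin n) ℂ,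
      Xᴴ = -X → Yᴴ = -Y → φ (X + Y) = φ X + φ Y)
    (hφsmul : ∀ (r : ℝ) (X : Matrix (Fin n) (Fin n) ℂ), Xᴴ = -X → φ (r • X) = r • φ X)
    (hφrange : ∀ X : Matrix (Fin n) (Fin n) ℂ, Xᴴ = -X → (φ X)ᴴ = -φ X)
    (hφsec : ∀ X : Matrix (Fin n) (Fin n) ℂ, Xᴴ = -X →
      φ X * A - A * φ X = X * B - B * X)
    (X₀ : Matrix (Fin n) (Fin n) ℂ) (hX₀ : X₀ᴴ = -X₀) (hX₀A : X₀ * A = A * X₀) :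
    X₀ * φ X₀ - φ X₀ * X₀ = 0 ∧
      ∀ ε > (0 : ℝ), ∃ δ > (0 : ℝ),
        ∀ (I : Set ℝ) (X : ℝ → Matrix (Fin n) (Fin n) ℂ),
          I.OrdConnected → (0 : ℝ) ∈ I →
          (∀ t ∈ I, (X t)ᴴ = -(X t)) →
          (∀ t ∈ I, HasDerivWithinAt X (X t * φ (X t) - φ (X t) * X t) I t) →
          ‖X 0 - X₀‖ < δ →
          ∀ t ∈ I, 0 ≤ t → ‖X t - X₀‖ < ε :=
  statement8_general n A B hAB hsimple φ hφsec X₀ hX₀ hX₀A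
end

section
/- Let n ≥ 1, let A ∈ Matrix (Fin n) (Fin n) ℂ be skew-Hermitian (Aᴴ = −A) with n distinct eigenvalues, and let X₀ be skew-Hermitian with X₀·A = A·X₀. If X is skew-Hermitian and det(X + λ·A − μ·1) = det(X₀ + λ·A − μ·1) for all λ, μ ∈ ℂ, then X = X₀. -/
/-! Conjugating by a unitary that diagonalises the Hermitian matrix `I • A`, we may assume
`A = diagonal a` with distinct `a i`; then `X₀` commutes with `A`, so `X₀ = diagonal x`.
Substituting `μ = x j + λ a j`, the polynomial `det (X - x j + λ (diagonal a - a j))` vanishes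
identically in `λ`, and its `λ ^ (n - 1)` coefficient is `(X j j - x j) ∏_{i ≠ j} (a i - a j)`:
`X` and `X₀` have the same diagonal. At `λ = 0` the skew-Hermitian matrices `X` and `X₀` have the
same characteristic polynomial, hence the same `tr (X * X)`. As `Z = X - X₀` has zero diagonal,
`tr (X₀ * Z) = 0`, so `tr (Zᴴ * Z) = tr (X₀ * X₀) - tr (X * X) = 0` and `Z = 0`. -/

open Matrix Polynomial Finset

theorem Polynomial.injective_of_prod_X_sub_C_eq {R ι : Type*} [CommRing R] [IsDomain R]
    [Fintype ι] {a b : ι → R} (hb : Function.Injective b)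
    (h : ∏ i, (X - C (a i)) = ∏ i, (X - C (b i))) : Function.Injective a := by
  have hroots : univ.val.map a = univ.val.map b := by
    simpa [roots_prod, prod_ne_zero_iff, X_sub_C_ne_zero] using congrArg roots h
  have hnodup : (univ.val.map a).Nodup := hroots ▸ univ.nodup.map hb
  exact fun i j hij =>
    (Multiset.nodup_map_iff_inj_on univ.nodup).mp hnodup i (mem_univ i) j (mem_univ j) hij

namespace Matrix

variable {R : Type*} [CommRing R] {n : Type*}

theorem X_smul_map_C_add_map_C_apply (A N : Matrix n n R) (k i : n) :
    ((X : R[X]) • A.map C + N.map C) k i = C (A k i) * X + C (N k i) := by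
  simp [X_mul_C]

theorem isHermitian_I_smul {M : Matrix n n ℂ} (hM : Mᴴ = -M) : (Complex.I • M).IsHermitian := by
  rw [IsHermitian, conjTranspose_smul, hM, Complex.star_def, Complex.conj_I, neg_smul, smul_neg,
    neg_neg]

variable [DecidableEq n]

theorem diagonal_add_smul_diagonal_sub_smul_one (x a : n → R) (l μ : R) :
    diagonal x + l • diagonal a - μ • (1 : Matrix n n R) = diagonal fun i => x i + l * a i - μ := by
  rw [← diagonal_smul, smul_one_eq_diagonal, diagonal_add, diagonal_sub]
  rfl

variable [Fintype n]

theorem eq_diagonal_of_mul_diagonal_eq [NoZeroDivisors R] {a : n → R} (ha : Function.Injective a)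
    {M : Matrix n n R} (h : M * diagonal a = diagonal a * M) : M = diagonal fun i => M i i := by
  ext k i
  by_cases hki : k = i
  · simp [hki]
  have hentry : M k i * a i = a k * M k i := by
    simpa [mul_diagonal, diagonal_mul] using congrFun₂ h k i
  have hzero : (a i - a k) * M k i = 0 := by linear_combination hentry
  simpa [diagonal_apply_ne _ hki, sub_eq_zero, ha.ne (Ne.symm hki)] using hzero

theorem det_conjStarAlgAut [StarRing R] (u : unitaryGroup n R) (M : Matrix n n R) :
    det (Unitary.conjStarAlgAut R _ u M) = det M := by
  rw [Unitary.conjStarAlgAut_apply, det_mul_comm, ← mul_assoc, Unitary.coe_star_mul_self, one_mul]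

theorem charpoly_conjStarAlgAut [StarRing R] (u : unitaryGroup n R) (M : Matrix n n R) :
    (Unitary.conjStarAlgAut R _ u M).charpoly = M.charpoly := by
  rw [Unitary.conjStarAlgAut_apply, charpoly_mul_comm, ← mul_assoc, Unitary.coe_star_mul_self,
    one_mul]

theorem eval_det_X_smul_add_C (A N : Matrix n n R) (r : R) :
    (det ((X : R[X]) • A.map C + N.map C)).eval r = det (r • A + N) := by
  rw [← coe_evalRingHom, RingHom.map_det]
  congr 1
  ext k i
  simp [mul_comm r]

theorem natDegree_prod_X_smul_diagonal_add_C_le (c : n → R) (N : Matrix n n R)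
    (σ : Equiv.Perm n) :
    (∏ i, ((X : R[X]) • (diagonal c).map C + N.map C) (σ i) i).natDegree ≤ #{i | σ i = i} := by
  rw [card_eq_sum_ones, sum_filter]
  refine (natDegree_prod_le _ _).trans (sum_le_sum fun i _ => ?_)
  rw [X_smul_map_C_add_map_C_apply]
  split_ifs with h
  · exact natDegree_linear_le
  · simp [diagonal_apply_ne _ h]

theorem coeff_det_X_smul_diagonal_add_C_of_eq_zero (c : n → R) (N : Matrix n n R) {j : n}
    (hj : c j = 0) :
    (det ((X : R[X]) • (diagonal c).map C + N.map C)).coeff (Fintype.card n - 1) =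
      N j j * ∏ i ∈ univ.erase j, c i := by
  rw [det_apply, finsetSum_coeff, ← add_sum_erase _ _ (mem_univ 1),
    sum_eq_zero fun σ hσ => ?_, add_zero]
  · have hcard : #(univ.erase j) * 1 = Fintype.card n - 1 := by
      rw [mul_one, card_erase_of_mem (mem_univ j), card_univ]
    simp only [Equiv.Perm.sign_one, one_smul, Equiv.Perm.one_apply, X_smul_map_C_add_map_C_apply,
      diagonal_apply_eq]
    rw [← mul_prod_erase _ _ (mem_univ j), ← hcard, hj, C_0, zero_mul, zero_add, coeff_C_mul,
      coeff_prod_of_natDegree_le _ _ _ fun i _ => natDegree_linear_le]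
    simp
  · rw [coeff_smul, coeff_eq_zero_of_natDegree_lt, smul_zero]
    exact (natDegree_prod_X_smul_diagonal_add_C_le c N σ).trans_lt
      (Equiv.Perm.fixed_point_card_lt_of_ne_one (ne_of_mem_erase hσ))

theorem diag_eq_of_det_pencil_eq [IsDomain R] [Infinite R] {a x : n → R}
    (ha : Function.Injective a) {Y : Matrix n n R}
    (h : ∀ l μ : R, det (Y + l • diagonal a - μ • 1) = det (diagonal x + l • diagonal a - μ • 1)) :
    Y.diag = x := by
  funext j
  set c : n → R := fun i => a i - a j
  have hvanish : ∀ r : R, det (r • diagonal c + (Y - x j • 1)) = 0 := by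
    intro r
    have hc : diagonal c = diagonal a - a j • 1 := by
      rw [smul_one_eq_diagonal, diagonal_sub]
    have hshift : r • diagonal c + (Y - x j • 1) = Y + r • diagonal a - (x j + r * a j) • 1 := by
      rw [hc]
      module
    rw [hshift, h, diagonal_add_smul_diagonal_sub_smul_one, det_diagonal]
    exact prod_eq_zero (mem_univ j) (by ring)
  have hpoly : det ((X : R[X]) • (diagonal c).map C + (Y - x j • 1).map C) = 0 :=
    Polynomial.funext fun r => by rw [eval_det_X_smul_add_C, hvanish, eval_zero]
  have hcoeff := congrArg (coeff · (Fintype.card n - 1)) hpoly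
  simp only [coeff_det_X_smul_diagonal_add_C_of_eq_zero c _ (sub_self (a j)), coeff_zero] at hcoeff
  have hprod : ∏ i ∈ univ.erase j, c i ≠ 0 :=
    prod_ne_zero_iff.mpr fun i hi => sub_ne_zero.mpr (ha.ne (ne_of_mem_erase hi))
  simpa [sub_eq_zero] using (mul_eq_zero.mp hcoeff).resolve_right hprod

theorem IsHermitian.trace_mul_self {𝕜 : Type*} [RCLike 𝕜] {A : Matrix n n 𝕜} (hA : A.IsHermitian) :
    (A * A).trace = ∑ i, (hA.eigenvalues i : 𝕜) ^ 2 := by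
  conv_lhs => rw [hA.spectral_theorem, ← map_mul, Unitary.conjStarAlgAut_apply, trace_mul_cycle,
    Unitary.coe_star_mul_self, one_mul, diagonal_mul_diagonal, trace_diagonal]
  simp [sq]

theorem IsHermitian.trace_mul_self_eq_of_charpoly_eq {𝕜 : Type*} [RCLike 𝕜] {A B : Matrix n n 𝕜}
    (hA : A.IsHermitian) (hB : B.IsHermitian) (h : A.charpoly = B.charpoly) :
    (A * A).trace = (B * B).trace := by
  rw [hA.trace_mul_self, hB.trace_mul_self, (hA.eigenvalues_eq_eigenvalues_iff hB).mpr h]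

theorem trace_mul_self_eq_of_det_sub_smul_eq {M N : Matrix n n ℂ} (hM : Mᴴ = -M) (hN : Nᴴ = -N)
    (h : ∀ μ : ℂ, det (M - μ • 1) = det (N - μ • 1)) : (M * M).trace = (N * N).trace := by
  have heval : ∀ (P : Matrix n n ℂ) (μ : ℂ), (Complex.I • P).charpoly.eval μ =
      (-Complex.I) ^ Fintype.card n * det (P - (-Complex.I * μ) • 1) := by
    intro P μ
    rw [eval_charpoly, ← det_smul]
    congr 1
    have hI : -Complex.I * (-Complex.I * μ) = -μ := by linear_combination μ * Complex.I_sq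
    rw [scalar_apply, ← smul_one_eq_diagonal, smul_sub, smul_smul, hI, neg_smul, neg_smul]
    abel
  have hcharpoly : (Complex.I • M).charpoly = (Complex.I • N).charpoly :=
    Polynomial.funext fun μ => by rw [heval, heval, h]
  have := (isHermitian_I_smul hM).trace_mul_self_eq_of_charpoly_eq (isHermitian_I_smul hN) hcharpoly
  simpa [smul_mul_smul] using this

theorem exists_conjStarAlgAut_eq_diagonal {A : Matrix n n ℂ} (hA : Aᴴ = -A) :
    ∃ (u : unitaryGroup n ℂ) (a : n → ℂ), Unitary.conjStarAlgAut ℂ _ u A = diagonal a := by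
  have hB := isHermitian_I_smul hA
  refine ⟨star hB.eigenvectorUnitary, fun i => -Complex.I * hB.eigenvalues i, ?_⟩
  refine smul_right_injective _ Complex.I_ne_zero ?_
  simp only [← map_smul, hB.conjStarAlgAut_star_eigenvectorUnitary, ← diagonal_smul]
  congr 1
  ext i
  simp [← mul_assoc]

open scoped ComplexOrder in
theorem eq_diagonal_of_det_pencil_eq {a x : n → ℂ} (ha : Function.Injective a)
    {Y : Matrix n n ℂ} (hY : Yᴴ = -Y) (hx : (diagonal x)ᴴ = -diagonal x)
    (h : ∀ l μ : ℂ, det (Y + l • diagonal a - μ • 1) = det (diagonal x + l • diagonal a - μ • 1)) :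
    Y = diagonal x := by
  have htrace : (Y * Y).trace = (diagonal x * diagonal x).trace :=
    trace_mul_self_eq_of_det_sub_smul_eq hY hx fun μ => by simpa using h 0 μ
  have hdiag := diag_eq_of_det_pencil_eq ha h
  set Z := Y - diagonal x with hZ
  have hZskew : Zᴴ = -Z := by rw [hZ, conjTranspose_sub, hY, hx, neg_sub_neg, neg_sub]
  have hZdiag : (diagonal x * Z).trace = 0 := by
    simp [trace, diagonal_mul, Z, ← hdiag]
  have hZZ : (Zᴴ * Z).trace = 0 := by
    rw [hZskew, neg_mul, trace_neg, neg_eq_zero]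
    rw [← add_sub_cancel (diagonal x) Y, ← hZ, add_mul, mul_add, mul_add, trace_add, trace_add,
      trace_add, trace_mul_comm Z, hZdiag] at htrace
    linear_combination htrace
  exact sub_eq_zero.mp (trace_conjTranspose_mul_self_eq_zero_iff.mp hZZ)

end Matrix

theorem statement9_general (n : ℕ)
    (A X₀ X : Matrix (Fin n) (Fin n) ℂ)
    (hA : Aᴴ = -A)
    (hsimple : ∃ μs : Fin n → ℂ, Function.Injective μs ∧
      A.charpoly = ∏ i : Fin n, (Polynomial.X - Polynomial.C (μs i)))
    (hX₀ : X₀ᴴ = -X₀) (hcomm : X₀ * A = A * X₀)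
    (hX : Xᴴ = -X)
    (hiso : ∀ lam μ : ℂ, (X + lam • A - μ • 1).det = (X₀ + lam • A - μ • 1).det) :
    X = X₀ := by
  obtain ⟨μs, hμs, hchar⟩ := hsimple
  obtain ⟨u, a, hφA⟩ := exists_conjStarAlgAut_eq_diagonal hA
  set φ := Unitary.conjStarAlgAut ℂ (Matrix (Fin n) (Fin n) ℂ) u
  have ha : Function.Injective a := Polynomial.injective_of_prod_X_sub_C_eq hμs <| by
    rw [← charpoly_diagonal, ← hφA, charpoly_conjStarAlgAut, hchar]
  have hskew : ∀ M : Matrix (Fin n) (Fin n) ℂ, Mᴴ = -M → (φ M)ᴴ = -φ M := fun M hM => by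
    rw [← star_eq_conjTranspose, ← map_star, star_eq_conjTranspose, hM, map_neg]
  have hφX₀ : φ X₀ = diagonal fun i => φ X₀ i i :=
    eq_diagonal_of_mul_diagonal_eq ha (by rw [← hφA, ← map_mul, hcomm, map_mul])
  have hpencil : ∀ l μ : ℂ, det (φ X + l • φ A - μ • 1) = det (φ X₀ + l • φ A - μ • 1) := by
    intro l μ
    have hlin : ∀ M, φ M + l • φ A - μ • 1 = φ (M + l • A - μ • 1) := fun M => by
      simp only [map_sub, map_add, map_smul, map_one]
    rw [hlin, hlin, det_conjStarAlgAut, det_conjStarAlgAut, hiso]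
  rw [hφA, hφX₀] at hpencil
  refine EquivLike.injective φ ?_
  rw [hφX₀]
  exact eq_diagonal_of_det_pencil_eq ha (hskew X hX) (hφX₀ ▸ hskew X₀ hX₀) hpencil

/-- Isospectral rigidity for pencils `X + λA` with `A` skew-Hermitian of
simple spectrum and `X₀` skew-Hermitian commuting with `A`: a skew-Hermitian `X`
isospectral with `X₀` equals `X₀`. -/
theorem statement9 (n : ℕ) (hn : 1 ≤ n)
    (A X₀ X : Matrix (Fin n) (Fin n) ℂ)
    (hA : Aᴴ = -A)
    (hsimple : ∃ μs : Fin n → ℂ, Function.Injective μs ∧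
      A.charpoly = ∏ i : Fin n, (Polynomial.X - Polynomial.C (μs i)))
    (hX₀ : X₀ᴴ = -X₀) (hcomm : X₀ * A = A * X₀)
    (hX : Xᴴ = -X)
    (hiso : ∀ lam μ : ℂ, (X + lam • A - μ • 1).det = (X₀ + lam • A - μ • 1).det) :
    X = X₀ :=
  statement9_general n A X₀ X hA hsimple hX₀ hcomm hX hiso
end

section
/- Fix reals a, b > 0 and m ∈ ℝ with m² ≥ 4(a + b). Let χ ∈ so(3, ℝ) be the matrix with entries χ₂₃ = 1, χ₃₂ = −1 and all other entries 0, and let J = diag(a, b, b). For M ∈ so(3, ℝ) let Ω(M) ∈ so(3, ℝ) be the unique skew-symmetric matrix with M = Ω(M)·J + J·Ω(M) (explicitly Ω(M)₁₂ = M₁₂/(a+b), Ω(M)₁₃ = M₁₃/(a+b), Ω(M)₂₃ = M₂₃/(2b)). Consider the Lagrange top equations Ṁ = [M, Ω(M)] + [Γ, χ], Γ̇ = [Γ, Ω(M)] for (M, Γ) ∈ so(3,ℝ) × so(3,ℝ). Then (M₀, Γ₀) = (m·χ, χ) is an equilibrium and it is Lyapunov stable: for every ε > 0 there exists δ > 0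 such that every differentiable curve (M, Γ) : I → so(3,ℝ) × so(3,ℝ), defined on an interval I containing 0, satisfying the Lagrange top equations on I and ‖M(0) − M₀‖ + ‖Γ(0) − Γ₀‖ < δ, satisfies ‖M(t) − M₀‖ + ‖Γ(t) − Γ₀‖ < ε for all t ∈ I with t ≥ 0. -/
open Matrix

attribute [local instance] Matrix.normedAddCommGroup Matrix.normedSpace

/-- The matrix `χ ∈ so(3, ℝ)` with `χ₂₃ = 1`, `χ₃₂ = −1` and all other entries `0`. -/
def lagChi : Matrix (Fin 3) (Fin 3) ℝ := !![0, 0, 0; 0, 0, 1; 0, -1, 0]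

/-- The angular velocity `Ω(M)` of the Lagrange top with inertia moments `a, b`:
the unique skew-symmetric matrix with `M = Ω(M)·J + J·Ω(M)`, `J = diag(a, b, b)`. -/
noncomputable def lagOmega (a b : ℝ) (M : Matrix (Fin 3) (Fin 3) ℝ) :
    Matrix (Fin 3) (Fin 3) ℝ :=
  !![0, M 0 1 / (a + b), M 0 2 / (a + b);
     -(M 0 1 / (a + b)), 0, M 1 2 / (2 * b);
     -(M 0 2 / (a + b)), -(M 1 2 / (2 * b)), 0]

/-! The sleeping top is the only point of `so(3) × so(3)` at which four conserved quantities of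
the flow (the symmetry `M₂₃`, the Casimirs `|Γ|²` and `⟨M, Γ⟩`, and the energy) take their
equilibrium values: on that common level set, with `s = 1 - Γ₂₃ ≥ 0`, the Cauchy–Schwarz inequality
for `(M₁₂, M₁₃)` and `(Γ₁₂, Γ₁₃)` reads `m² s² ≤ 2(a + b) s² (2 - s)`, which forces `s = 0` once
`m² ≥ 4(a + b)`. Stability follows by compactness: the conserved quantities map the small sphere
around the equilibrium (within the closed set `so(3) × so(3)`) onto a compact set missing their
equilibrium value, so a trajectory starting close enough to the equilibrium never reaches it. -/

open Set Metric

local notation "𝕄" => Matrix (Fin 3) (Fin 3) ℝ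

theorem Set.OrdConnected.eq_of_hasDerivWithinAt_zero {E : Type*} [NormedAddCommGroup E]
    [NormedSpace ℝ E] {I : Set ℝ} (hI : I.OrdConnected) {f : ℝ → E}
    (hf : ∀ u ∈ I, HasDerivWithinAt f 0 I u) {s t : ℝ} (hs : s ∈ I) (ht : t ∈ I) :
    f s = f t := by
  have h := Convex.norm_image_sub_le_of_norm_hasDerivWithin_le (f' := fun _ => (0 : E))
    (C := 0) hf (fun _ _ => norm_zero.le) hI.convex ht hs
  rw [zero_mul, norm_le_zero_iff, sub_eq_zero] at h
  exact h

theorem dist_lt_of_conserved_of_fiber_eq {X Y : Type*} [MetricSpace X] [ProperSpace X]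
    [TopologicalSpace Y] [T2Space Y] {S : Set X} (hS : IsClosed S) {F : X → Y}
    (hF : Continuous F) {x₀ : X} (hfiber : ∀ z ∈ S, F z = F x₀ → z = x₀) {ε : ℝ} (hε : 0 < ε) :
    ∃ δ > 0, ∀ (I : Set ℝ) (γ : ℝ → X), I.OrdConnected → (0 : ℝ) ∈ I → ContinuousOn γ I →
      MapsTo γ I S → (∀ t ∈ I, F (γ t) = F (γ 0)) → dist (γ 0) x₀ < δ →
      ∀ t ∈ I, dist (γ t) x₀ < ε := by
  set K := S ∩ sphere x₀ ε
  have hK : IsCompact K := (isCompact_sphere x₀ ε).inter_left hS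
  have hx₀ : x₀ ∈ F ⁻¹' (F '' K)ᶜ := by
    rintro ⟨z, ⟨hzS, hzε⟩, hFz⟩
    rw [hfiber z hzS hFz, mem_sphere, dist_self] at hzε
    exact hε.ne hzε
  obtain ⟨δ, hδ, hball⟩ :=
    isOpen_iff.mp ((hK.image hF).isClosed.isOpen_compl.preimage hF) x₀ hx₀
  refine ⟨min δ ε, lt_min hδ hε, fun I γ hI h0 hγ hγS hcons hγ0 t ht => ?_⟩
  by_contra! hεt
  obtain ⟨s, hs, hsε⟩ : ε ∈ (fun s => dist (γ s) x₀) '' uIcc 0 t :=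
    intermediate_value_uIcc ((continuous_id.dist continuous_const).comp_continuousOn
      (hγ.mono (hI.uIcc_subset h0 ht)))
      (Icc_subset_uIcc ⟨(hγ0.trans_le (min_le_right _ _)).le, hεt⟩)
  have hsI := hI.uIcc_subset h0 ht hs
  exact hball (hγ0.trans_le (min_le_left _ _)) ⟨γ s, ⟨hγS hsI, hsε⟩, hcons s hsI⟩

namespace LagrangeTop

lemma skew_entries {P : 𝕄} (h : Pᵀ = -P) :
    P 0 0 = 0 ∧ P 1 1 = 0 ∧ P 2 2 = 0 ∧ P 1 0 = -P 0 1 ∧ P 2 0 = -P 0 2 ∧ P 2 1 = -P 1 2 := by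
  have e : ∀ i j, P j i = -P i j := fun i j => congr_fun (congr_fun h i) j
  exact ⟨by linarith [e 0 0], by linarith [e 1 1], by linarith [e 2 2], e 0 1, e 0 2, e 1 2⟩

lemma skew_ext {P Q : 𝕄} (hP : Pᵀ = -P) (hQ : Qᵀ = -Q) (h₀₁ : P 0 1 = Q 0 1)
    (h₀₂ : P 0 2 = Q 0 2) (h₁₂ : P 1 2 = Q 1 2) : P = Q := by
  obtain ⟨p₀, p₁, p₂, p₁₀, p₂₀, p₂₁⟩ := skew_entries hP
  obtain ⟨q₀, q₁, q₂, q₁₀, q₂₀, q₂₁⟩ := skew_entries hQ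
  ext i j
  fin_cases i <;> fin_cases j <;> simp_all

lemma lagChi_transpose : lagChiᵀ = -lagChi := by
  ext i j
  fin_cases i <;> fin_cases j <;> simp [lagChi]

/-- Entries are 0-indexed: `z.1 1 2` is `M₂₃`. -/
noncomputable def integrals (a b : ℝ) (z : 𝕄 × 𝕄) : ℝ × ℝ × ℝ × ℝ :=
  (z.1 1 2,
    z.2 0 1 ^ 2 + z.2 0 2 ^ 2 + z.2 1 2 ^ 2,
    z.1 0 1 * z.2 0 1 + z.1 0 2 * z.2 0 2 + z.1 1 2 * z.2 1 2,
    (z.1 0 1 ^ 2 + z.1 0 2 ^ 2) / (2 * (a + b)) + z.1 1 2 ^ 2 / (4 * b) + z.2 1 2)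

lemma continuous_integrals (a b : ℝ) : Continuous (integrals a b) := by
  unfold integrals
  fun_prop

lemma eq_sleeping_of_integrals_eq {a b m : ℝ} (hab : 0 < a + b) (hm : 4 * (a + b) ≤ m ^ 2)
    {M Γ : 𝕄} (hM : Mᵀ = -M) (hΓ : Γᵀ = -Γ)
    (h : integrals a b (M, Γ) = integrals a b (m • lagChi, lagChi)) :
    (M, Γ) = (m • lagChi, lagChi) := by
  simp only [integrals, lagChi, Matrix.smul_apply, of_apply, cons_val', cons_val, cons_val_fin_one,
    cons_val_one, cons_val_zero, smul_eq_mul, mul_one, ne_eq, OfNat.ofNat_ne_zero,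
    not_false_eq_true, zero_pow, add_zero, one_pow, zero_add, mul_zero, zero_div,
    Prod.mk.injEq] at h
  obtain ⟨hp, hC, hD, hH⟩ := h
  rw [hp] at hD hH
  have hx : M 0 1 ^ 2 + M 0 2 ^ 2 = 2 * (a + b) * (1 - Γ 1 2) := by
    have h' : (M 0 1 ^ 2 + M 0 2 ^ 2) / (2 * (a + b)) = 1 - Γ 1 2 := by linarith
    rw [div_eq_iff (by positivity)] at h'
    linarith
  have hs : 0 ≤ 1 - Γ 1 2 := by nlinarith [sq_nonneg (M 0 1), sq_nonneg (M 0 2)]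
  have hcs : (M 0 1 * Γ 0 1 + M 0 2 * Γ 0 2) ^ 2 ≤
      (M 0 1 ^ 2 + M 0 2 ^ 2) * (Γ 0 1 ^ 2 + Γ 0 2 ^ 2) := by
    nlinarith [sq_nonneg (M 0 1 * Γ 0 2 - M 0 2 * Γ 0 1)]
  have hq : Γ 1 2 = 1 := by
    rw [hx, show M 0 1 * Γ 0 1 + M 0 2 * Γ 0 2 = m * (1 - Γ 1 2) by linarith,
      show Γ 0 1 ^ 2 + Γ 0 2 ^ 2 = (1 - Γ 1 2) * (1 + Γ 1 2) by linarith] at hcs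
    have hs3 : (a + b) * (1 - Γ 1 2) ^ 3 ≤ 0 := by nlinarith [mul_nonneg hs hs]
    have : (1 - Γ 1 2) ^ 3 = 0 :=
      le_antisymm (nonpos_of_mul_nonpos_right hs3 hab) (pow_nonneg hs 3)
    linarith [pow_eq_zero_iff (n := 3) (by norm_num) |>.mp this]
  have hM₀ : M 0 1 = 0 ∧ M 0 2 = 0 := by
    rw [hq, sub_self, mul_zero] at hx
    exact ⟨by nlinarith [sq_nonneg (M 0 2)], by nlinarith [sq_nonneg (M 0 1)]⟩
  have hΓ₀ : Γ 0 1 = 0 ∧ Γ 0 2 = 0 := by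
    rw [hq] at hC
    exact ⟨by nlinarith [sq_nonneg (Γ 0 2)], by nlinarith [sq_nonneg (Γ 0 1)]⟩
  have hχ : (m • lagChi)ᵀ = -(m • lagChi) := by rw [transpose_smul, lagChi_transpose, smul_neg]
  refine Prod.ext (skew_ext hM hχ ?_ ?_ ?_) (skew_ext hΓ lagChi_transpose ?_ ?_ ?_) <;>
    simp [lagChi, hp, hq, hM₀, hΓ₀]

lemma sleeping_isEquilibrium (a b m : ℝ) :
    m • lagChi * lagOmega a b (m • lagChi) - lagOmega a b (m • lagChi) * (m • lagChi)
        + (lagChi * lagChi - lagChi * lagChi) = 0 ∧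
      lagChi * lagOmega a b (m • lagChi) - lagOmega a b (m • lagChi) * lagChi = 0 := by
  constructor <;> ext i j <;> fin_cases i <;> fin_cases j <;>
    simp [lagChi, lagOmega] <;> ring

lemma isClosed_skew : IsClosed {z : 𝕄 × 𝕄 | z.1ᵀ = -z.1 ∧ z.2ᵀ = -z.2} :=
  (isClosed_eq (by fun_prop) (by fun_prop)).inter (isClosed_eq (by fun_prop) (by fun_prop))

structure IsSolution (a b : ℝ) (I : Set ℝ) (M Γ : ℝ → 𝕄) : Prop where
  skew : ∀ t ∈ I, (M t)ᵀ = -(M t) ∧ (Γ t)ᵀ = -(Γ t)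
  hasDerivWithinAt_M : ∀ t ∈ I, HasDerivWithinAt M
    (M t * lagOmega a b (M t) - lagOmega a b (M t) * M t + (Γ t * lagChi - lagChi * Γ t)) I t
  hasDerivWithinAt_Γ : ∀ t ∈ I, HasDerivWithinAt Γ
    (Γ t * lagOmega a b (M t) - lagOmega a b (M t) * Γ t) I t

namespace IsSolution

variable {a b : ℝ} {I : Set ℝ} {M Γ : ℝ → 𝕄}

lemma continuousOn (h : IsSolution a b I M Γ) : ContinuousOn (fun t => (M t, Γ t)) I :=
  fun t ht => (h.hasDerivWithinAt_M t ht).continuousWithinAt.prodMk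
    (h.hasDerivWithinAt_Γ t ht).continuousWithinAt

lemma hasDerivWithinAt_entries (h : IsSolution a b I M Γ) {u : ℝ} (hu : u ∈ I) :
    HasDerivWithinAt (fun s => M s 0 1)
      (M u 0 2 * M u 1 2 / (a + b) - M u 0 2 * M u 1 2 / (2 * b) - Γ u 0 2) I u ∧
    HasDerivWithinAt (fun s => M s 0 2)
      (M u 0 1 * M u 1 2 / (2 * b) - M u 0 1 * M u 1 2 / (a + b) + Γ u 0 1) I u ∧
    HasDerivWithinAt (fun s => M s 1 2) 0 I u ∧
    HasDerivWithinAt (fun s => Γ s 0 1)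
      (M u 0 2 * Γ u 1 2 / (a + b) - M u 1 2 * Γ u 0 2 / (2 * b)) I u ∧
    HasDerivWithinAt (fun s => Γ s 0 2)
      (M u 1 2 * Γ u 0 1 / (2 * b) - M u 0 1 * Γ u 1 2 / (a + b)) I u ∧
    HasDerivWithinAt (fun s => Γ s 1 2)
      ((M u 0 1 * Γ u 0 2 - M u 0 2 * Γ u 0 1) / (a + b)) I u := by
  have entry {N : ℝ → 𝕄} {N' : 𝕄} (hN : HasDerivWithinAt N N' I u) (i j : Fin 3) :
      HasDerivWithinAt (fun s => N s i j) (N' i j) I u :=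
    hasDerivWithinAt_pi.mp (hasDerivWithinAt_pi.mp hN i) j
  have hM := h.hasDerivWithinAt_M u hu
  have hΓ := h.hasDerivWithinAt_Γ u hu
  obtain ⟨m₀, m₁, m₂, m₁₀, -, m₂₁⟩ := skew_entries (h.skew u hu).1
  obtain ⟨g₀, g₁, g₂, g₁₀, -, g₂₁⟩ := skew_entries (h.skew u hu).2
  refine ⟨(entry hM 0 1).congr_deriv ?_, (entry hM 0 2).congr_deriv ?_,
    (entry hM 1 2).congr_deriv ?_, (entry hΓ 0 1).congr_deriv ?_,
    (entry hΓ 0 2).congr_deriv ?_, (entry hΓ 1 2).congr_deriv ?_⟩ <;>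
  simp [lagChi, lagOmega, mul_apply, vecMul, dotProduct, Fin.sum_univ_three, m₀, m₁, m₂, m₁₀,
    m₂₁, g₀, g₁, g₂, g₁₀, g₂₁] <;> ring

lemma integrals_eq (h : IsSolution a b I M Γ) (hI : I.OrdConnected) {s t : ℝ} (hs : s ∈ I)
    (ht : t ∈ I) : integrals a b (M s, Γ s) = integrals a b (M t, Γ t) := by
  refine hI.eq_of_hasDerivWithinAt_zero (f := fun u => integrals a b (M u, Γ u))
    (fun u hu => ?_) hs ht
  obtain ⟨m₀₁, m₀₂, m₁₂, g₀₁, g₀₂, g₁₂⟩ := h.hasDerivWithinAt_entries hu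
  have hC := ((g₀₁.fun_pow 2).add (g₀₂.fun_pow 2)).add (g₁₂.fun_pow 2)
  have hD := ((m₀₁.mul g₀₁).add (m₀₂.mul g₀₂)).add (m₁₂.mul g₁₂)
  have hH := ((((m₀₁.fun_pow 2).add (m₀₂.fun_pow 2)).div_const (2 * (a + b))).add
    ((m₁₂.fun_pow 2).div_const (4 * b))).add g₁₂
  refine (m₁₂.prodMk (hC.prodMk (hD.prodMk hH))).congr_deriv ?_
  simp only [Prod.mk_eq_zero, true_and, div_eq_mul_inv, mul_inv]
  refine ⟨?_, ?_, ?_⟩ <;> ring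

end IsSolution

end LagrangeTop

/-- The sleeping Lagrange top `(M₀, Γ₀) = (m·χ, χ)` with
`m² ≥ 4(a + b)` is an equilibrium of the Lagrange top equations
`Ṁ = [M, Ω(M)] + [Γ, χ]`, `Γ̇ = [Γ, Ω(M)]`, and it is Lyapunov stable. -/
theorem statement10 (a b m : ℝ) (ha : 0 < a) (hb : 0 < b)
    (hm : m ^ 2 ≥ 4 * (a + b)) :
    (m • lagChi * lagOmega a b (m • lagChi) - lagOmega a b (m • lagChi) * (m • lagChi)
        + (lagChi * lagChi - lagChi * lagChi) = 0 ∧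
      lagChi * lagOmega a b (m • lagChi) - lagOmega a b (m • lagChi) * lagChi = 0) ∧
      ∀ ε > (0 : ℝ), ∃ δ > (0 : ℝ),
        ∀ (I : Set ℝ) (M Γ : ℝ → Matrix (Fin 3) (Fin 3) ℝ),
          I.OrdConnected → (0 : ℝ) ∈ I →
          (∀ t ∈ I, (M t)ᵀ = -(M t) ∧ (Γ t)ᵀ = -(Γ t)) →
          (∀ t ∈ I, HasDerivWithinAt M
            (M t * lagOmega a b (M t) - lagOmega a b (M t) * M t
              + (Γ t * lagChi - lagChi * Γ t)) I t) →
          (∀ t ∈ I, HasDerivWithinAt Γ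
            (Γ t * lagOmega a b (M t) - lagOmega a b (M t) * Γ t) I t) →
          ‖M 0 - m • lagChi‖ + ‖Γ 0 - lagChi‖ < δ →
          ∀ t ∈ I, 0 ≤ t → ‖M t - m • lagChi‖ + ‖Γ t - lagChi‖ < ε := by
  refine ⟨LagrangeTop.sleeping_isEquilibrium a b m, fun ε hε => ?_⟩
  obtain ⟨δ, hδ, hstable⟩ := dist_lt_of_conserved_of_fiber_eq LagrangeTop.isClosed_skew
    (LagrangeTop.continuous_integrals a b)
    (fun z hz => LagrangeTop.eq_sleeping_of_integrals_eq (add_pos ha hb) hm hz.1 hz.2)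
    (half_pos hε)
  refine ⟨δ, hδ, fun I M Γ hI h0 hskew hM hΓ hinit t ht _ => ?_⟩
  have hsol : LagrangeTop.IsSolution a b I M Γ := ⟨hskew, hM, hΓ⟩
  have hdist (s : ℝ) : dist (M s, Γ s) (m • lagChi, lagChi) =
      max ‖M s - m • lagChi‖ ‖Γ s - lagChi‖ := by
    rw [Prod.dist_eq, dist_eq_norm, dist_eq_norm]
  have hclose := hstable I (fun s => (M s, Γ s)) hI h0 hsol.continuousOn hskew
    (fun s hs => hsol.integrals_eq hI hs h0)
    (by rw [hdist]; exact (max_le_add_of_nonneg (norm_nonneg _) (norm_nonneg _)).trans_lt hinit)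
    t ht
  rw [hdist, max_lt_iff] at hclose
  linarith
end

section
/- Fix reals a, b > 0 and m ∈ ℝ with m² ≥ 4(a + b), and let χ be the complex 3×3 matrix with entries χ₂₃ = 1, χ₃₂ = −1 and all other entries 0. If M, Γ ∈ Matrix (Fin 3) (Fin 3) ℂ are skew-Hermitian (Mᴴ = −M, Γᴴ = −Γ) and det(λ²(a+b)·χ + λ·M + Γ − μ·1) = det(λ²(a+b)·χ + λ·m·χ + χ − μ·1) for all λ, μ ∈ ℂ, then M = m·χ and Γ = χ. -/
open Matrix

/-- The matrix `χ` with `χ₂₃ = 1`, `χ₃₂ = −1` and all other entries `0`, over `ℂ`. -/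
def chiC : Matrix (Fin 3) (Fin 3) ℂ := !![0, 0, 0; 0, 0, 1; 0, -1, 0]

/-!
Isospectrality gives `tr L_λ² = tr (L⁰_λ)²` for every `λ`. The equilibrium pencil is
`L⁰_λ = p(λ) χ` with `p(λ) = (a+b)λ² + mλ + 1`, and `m² ≥ 4(a+b)` gives a real root `x₀` of `p`.
For real `λ` the matrix `L_λ` is skew-Hermitian, so `tr L_λ² = -‖L_λ‖²`; hence `L_{x₀} = 0`, which
writes `Γ - χ = -x₀ (M - mχ)`. Comparing the `λ³` and `λ²` coefficients of the two trace
polynomials then forces `tr (M - mχ)² = 0`, i.e. `M = mχ`, and so `Γ = χ`.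
-/

theorem coeffs_eq_of_forall_quartic_eq {K : Type*} [Field K] [CharZero K]
    {a₀ a₁ a₂ a₃ a₄ b₀ b₁ b₂ b₃ b₄ : K}
    (h : ∀ x : K, a₄ * x ^ 4 + a₃ * x ^ 3 + a₂ * x ^ 2 + a₁ * x + a₀
      = b₄ * x ^ 4 + b₃ * x ^ 3 + b₂ * x ^ 2 + b₁ * x + b₀) :
    a₄ = b₄ ∧ a₃ = b₃ ∧ a₂ = b₂ ∧ a₁ = b₁ ∧ a₀ = b₀ := by
  have h₀ := h 0
  have h₁ := h 1
  have h₂ := h (-1)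
  have h₃ := h 2
  have h₄ := h (-2)
  refine ⟨?_, ?_, ?_, ?_, ?_⟩
  · linear_combination (h₃ + h₄ - 4 * h₁ - 4 * h₂ + 6 * h₀) / 24
  · linear_combination (h₃ - h₄ - 2 * h₁ + 2 * h₂) / 12
  · linear_combination (16 * h₁ + 16 * h₂ - h₃ - h₄ - 30 * h₀) / 24
  · linear_combination (8 * h₁ - 8 * h₂ - h₃ + h₄) / 12
  · linear_combination h₀

theorem Matrix.eq_zero_of_conjTranspose_eq_neg_of_trace_mul_self_eq_zero {n R : Type*}
    [Fintype n] [PartialOrder R] [NonUnitalRing R] [StarRing R] [StarOrderedRing R]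
    [NoZeroDivisors R] {X : Matrix n n R} (hX : Xᴴ = -X) (h : (X * X).trace = 0) : X = 0 := by
  rw [← trace_mul_conjTranspose_self_eq_zero_iff, hX, mul_neg, trace_neg, h, neg_zero]

section QuadPencil

variable {n R : Type*} [CommRing R]

def quadPencil (A B C : Matrix n n R) (x : R) : Matrix n n R := x ^ 2 • A + x • B + C

theorem trace_quadPencil_mul_self [Fintype n] (A B C : Matrix n n R) (x : R) :
    (quadPencil A B C x * quadPencil A B C x).trace
      = (A * A).trace * x ^ 4 + 2 * (A * B).trace * x ^ 3
        + ((B * B).trace + 2 * (A * C).trace) * x ^ 2 + 2 * (B * C).trace * x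
        + (C * C).trace := by
  simp only [quadPencil, add_mul, mul_add, smul_mul, Matrix.mul_smul, trace_add, trace_smul,
    smul_eq_mul, trace_mul_comm B A, trace_mul_comm C A, trace_mul_comm C B]
  ring

theorem conjTranspose_quadPencil [StarRing R] {A B C : Matrix n n R} (hA : Aᴴ = -A)
    (hB : Bᴴ = -B) (hC : Cᴴ = -C) {x : R} (hx : star x = x) :
    (quadPencil A B C x)ᴴ = -quadPencil A B C x := by
  simp only [quadPencil, conjTranspose_add, conjTranspose_smul, star_pow, hx, hA, hB, hC,
    smul_neg, neg_add]

theorem quadPencil_smul_smul_self (χ : Matrix n n R) (c m x : R) :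
    quadPencil (c • χ) (m • χ) χ x = (c * x ^ 2 + m * x + 1) • χ := by
  simp only [quadPencil]
  module

end QuadPencil

open scoped ComplexOrder in
theorem quadPencil_eq_of_forall_trace_mul_self_eq {n : Type*} [Fintype n]
    {χ M Γ : Matrix n n ℂ} (hχ : χᴴ = -χ) (hM : Mᴴ = -M) (hΓ : Γᴴ = -Γ) {c m x₀ : ℝ}
    (hc : c ≠ 0) (hx₀ : c * (x₀ * x₀) + m * x₀ + 1 = 0)
    (h : ∀ x : ℂ, (quadPencil ((c : ℂ) • χ) M Γ x * quadPencil ((c : ℂ) • χ) M Γ x).trace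
      = (quadPencil ((c : ℂ) • χ) ((m : ℂ) • χ) χ x
          * quadPencil ((c : ℂ) • χ) ((m : ℂ) • χ) χ x).trace) :
    M = (m : ℂ) • χ ∧ Γ = χ := by
  set D := M - (m : ℂ) • χ with hD
  obtain ⟨-, h₃, h₂, -, -⟩ := coeffs_eq_of_forall_quartic_eq fun x => by
    simpa only [trace_quadPencil_mul_self] using h x
  have hx₀C : (c : ℂ) * (x₀ : ℂ) ^ 2 + m * x₀ + 1 = 0 := by
    exact_mod_cast (by linear_combination hx₀)
  have hL₀ : quadPencil ((c : ℂ) • χ) M Γ x₀ = 0 := by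
    refine eq_zero_of_conjTranspose_eq_neg_of_trace_mul_self_eq_zero
      (conjTranspose_quadPencil (by rw [conjTranspose_smul, hχ, Complex.star_def,
        Complex.conj_ofReal, smul_neg]) hM hΓ (Complex.conj_ofReal x₀)) ?_
    rw [h, quadPencil_smul_smul_self, hx₀C, zero_smul, zero_mul, trace_zero]
  have hΓD : Γ = χ - (x₀ : ℂ) • D := by
    have hE₀ := quadPencil_smul_smul_self χ (c : ℂ) m x₀
    rw [hx₀C, zero_smul] at hE₀
    unfold quadPencil at hL₀ hE₀
    linear_combination (norm := module) hL₀ - hE₀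
  have hMD : M = D + (m : ℂ) • χ := by rw [hD, sub_add_cancel]
  have hc' : (c : ℂ) ≠ 0 := Complex.ofReal_ne_zero.mpr hc
  have hχD : (χ * D).trace = 0 := by
    rw [hMD] at h₃
    simp only [smul_mul, mul_add, Matrix.mul_smul, trace_add, trace_smul, smul_eq_mul] at h₃
    simpa [hc'] using h₃
  have hDD : (D * D).trace = 0 := by
    rw [hMD, hΓD] at h₂
    simp only [smul_mul, mul_add, add_mul, mul_sub, Matrix.mul_smul, trace_add, trace_sub,
      trace_smul, smul_eq_mul, trace_mul_comm D χ, hχD] at h₂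
    linear_combination h₂
  have hD0 : D = 0 := eq_zero_of_conjTranspose_eq_neg_of_trace_mul_self_eq_zero
    (by rw [hD, conjTranspose_sub, conjTranspose_smul, hM, hχ, Complex.star_def,
      Complex.conj_ofReal, smul_neg, neg_sub_neg, neg_sub]) hDD
  exact ⟨sub_eq_zero.mp hD0, by rw [hΓD, hD0, smul_zero, sub_zero]⟩

theorem two_mul_det_sub_smul_one_fin_three {R : Type*} [CommRing R]
    (X : Matrix (Fin 3) (Fin 3) R) (μ : R) :
    2 * (X - μ • 1).det = -2 * μ ^ 3 + 2 * X.trace * μ ^ 2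
      - (X.trace ^ 2 - (X * X).trace) * μ + 2 * X.det := by
  simp [det_fin_three, trace_fin_three, mul_apply, Fin.sum_univ_three, one_apply]
  ring

theorem trace_mul_self_eq_of_forall_det_sub_smul_eq {K : Type*} [Field K] [CharZero K]
    {X Y : Matrix (Fin 3) (Fin 3) K} (h : ∀ μ : K, (X - μ • 1).det = (Y - μ • 1).det) :
    (X * X).trace = (Y * Y).trace := by
  have h₀ := congrArg (2 * ·) (h 0)
  have h₁ := congrArg (2 * ·) (h 1)
  have h₂ := congrArg (2 * ·) (h (-1))
  simp only [two_mul_det_sub_smul_one_fin_three] at h₀ h₁ h₂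
  have ht : X.trace = Y.trace := by linear_combination (h₁ + h₂) / 4 - h₀ / 2
  linear_combination (h₁ - h₂) / 2 + (X.trace + Y.trace) * ht

theorem chiC_conjTranspose : chiCᴴ = -chiC := by
  ext i j
  fin_cases i <;> fin_cases j <;> simp [chiC]

/-- Isospectral rigidity for the sleeping Lagrange top: if
`m² ≥ 4(a + b)` and the pencil `λ²(a+b)χ + λM + Γ` with `M, Γ` skew-Hermitian is
isospectral with the equilibrium pencil `λ²(a+b)χ + λmχ + χ`, then `M = mχ` and
`Γ = χ`. -/
theorem statement11 (a b m : ℝ) (ha : 0 < a) (hb : 0 < b)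
    (hm : m ^ 2 ≥ 4 * (a + b))
    (M Γ : Matrix (Fin 3) (Fin 3) ℂ) (hM : Mᴴ = -M) (hΓ : Γᴴ = -Γ)
    (hiso : ∀ lam μ : ℂ,
      (lam ^ 2 • (((a : ℂ) + (b : ℂ)) • chiC) + lam • M + Γ - μ • 1).det
        = (lam ^ 2 • (((a : ℂ) + (b : ℂ)) • chiC) + lam • ((m : ℂ) • chiC) + chiC
            - μ • 1).det) :
    M = (m : ℂ) • chiC ∧ Γ = chiC := by
  have hc : a + b ≠ 0 := by positivity
  obtain ⟨x₀, hx₀⟩ := exists_quadratic_eq_zero hc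
    ⟨√(discrim (a + b) m 1), (Real.mul_self_sqrt (by rw [discrim]; linarith)).symm⟩
  refine quadPencil_eq_of_forall_trace_mul_self_eq chiC_conjTranspose hM hΓ hc hx₀ fun x => ?_
  push_cast
  exact trace_mul_self_eq_of_forall_det_sub_smul_eq (hiso x)
end

section
/- Let a₁ < a₂ < a₃ be real numbers and D = diag(a₁, a₂, a₃). Let M₀ ∈ Matrix (Fin 3) (Fin 3) ℂ be the matrix with (M₀)₁₃ = 1, (M₀)₃₁ = −1 and all other entries 0. Let M be a skew-Hermitian 3×3 complex matrix (Mᴴ = −M) and write z = M₁₂, y = M₁₃, x = M₂₃. Then det(M + λ·D − μ·1) = det(M₀ + λ·D − μ·1) for all λ, μ ∈ ℂ if and only if |x|² + |y|² + |z|² = 1, a₁·|x|² + a₂·|y|² + a₃·|z|² = a₂, and x·conj(y)·z ∈ ℝ. -/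
open Matrix ComplexConjugate

/-! Expanding both determinants, `det(M + λD − μ) − det(M₀ + λD − μ)` is affine in `(λ, μ)`:
its `λ`-, `μ`- and constant coefficients are `a₁|x|² + a₂|y|² + a₃|z|² − a₂`,
`1 − |x|² − |y|² − |z|²` and `w̄ − w` with `w = x ȳ z`. The pencils are isospectral iff all three
vanish. -/

theorem forall_affine_eq_zero_iff {R : Type*} [CommRing R] (A B C : R) :
    (∀ s t : R, s * A - t * B - C = 0) ↔ A = 0 ∧ B = 0 ∧ C = 0 := by
  constructor
  · intro h
    have hC : C = 0 := by simpa using h 0 0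
    have hA : A = 0 := by simpa [hC] using h 1 0
    have hB : B = 0 := by simpa [hC] using h 0 1
    exact ⟨hA, hB, hC⟩
  · rintro ⟨rfl, rfl, rfl⟩ s t
    ring

theorem det_skewHermitian_add_smul_diagonal_sub_smul_one (x y z a₁ a₂ a₃ lam μ : ℂ) :
    (!![0, z, y; -conj z, 0, x; -conj y, -conj x, 0] + lam • diagonal ![a₁, a₂, a₃] - μ • 1).det
      = (lam * a₁ - μ) * (lam * a₂ - μ) * (lam * a₃ - μ)
        + ‖x‖ ^ 2 * (lam * a₁ - μ) + ‖y‖ ^ 2 * (lam * a₂ - μ) + ‖z‖ ^ 2 * (lam * a₃ - μ)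
        - (x * conj y * z - conj (x * conj y * z)) := by
  simp [det_fin_three, ← Complex.mul_conj', one_apply]
  ring

theorem det_pencil_sub_det_pencil_rotation (x y z a₁ a₂ a₃ lam μ : ℂ) :
    (!![0, z, y; -conj z, 0, x; -conj y, -conj x, 0] + lam • diagonal ![a₁, a₂, a₃] - μ • 1).det
      - (!![0, 0, 1; 0, 0, 0; -1, 0, 0] + lam • diagonal ![a₁, a₂, a₃] - μ • 1).det
      = lam * (a₁ * ‖x‖ ^ 2 + a₂ * ‖y‖ ^ 2 + a₃ * ‖z‖ ^ 2 - a₂)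
        - μ * (‖x‖ ^ 2 + ‖y‖ ^ 2 + ‖z‖ ^ 2 - 1) - (x * conj y * z - conj (x * conj y * z)) := by
  have hM₀ : (!![0, 0, 1; 0, 0, 0; -1, 0, 0] : Matrix (Fin 3) (Fin 3) ℂ)
      = !![0, 0, 1; -conj 0, 0, 0; -conj 1, -conj 0, 0] := by
    simp
  rw [hM₀, det_skewHermitian_add_smul_diagonal_sub_smul_one,
    det_skewHermitian_add_smul_diagonal_sub_smul_one]
  simp only [norm_zero, norm_one, zero_mul, mul_zero, map_zero, Complex.ofReal_zero,
    Complex.ofReal_one]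
  ring

theorem statement14_general (a₁ a₂ a₃ : ℝ) (x y z : ℂ) :
    (∀ lam μ : ℂ,
      (!![0, z, y; -(starRingEnd ℂ) z, 0, x; -(starRingEnd ℂ) y, -(starRingEnd ℂ) x, 0]
          + lam • Matrix.diagonal ![(a₁ : ℂ), (a₂ : ℂ), (a₃ : ℂ)] - μ • 1).det
        = (!![0, 0, 1; 0, 0, 0; -1, 0, 0]
            + lam • Matrix.diagonal ![(a₁ : ℂ), (a₂ : ℂ), (a₃ : ℂ)] - μ • 1).det)
      ↔ (‖x‖ ^ 2 + ‖y‖ ^ 2 + ‖z‖ ^ 2 = 1 ∧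
          a₁ * ‖x‖ ^ 2 + a₂ * ‖y‖ ^ 2 + a₃ * ‖z‖ ^ 2 = a₂ ∧
          (x * (starRingEnd ℂ) y * z).im = 0) := by
  simp_rw [← sub_eq_zero (a := det _), det_pencil_sub_det_pencil_rotation,
    forall_affine_eq_zero_iff, sub_eq_zero, eq_comm (b := conj _), Complex.conj_eq_iff_im]
  norm_cast
  tauto

/-- Description of the isospectral variety of the rotation about the
middle axis of a three-dimensional rigid body: a skew-Hermitian matrix
`M = [[0, z, y], [−conj z, 0, x], [−conj y, −conj x, 0]]` gives a pencil `M + λD`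
isospectral with `M₀ + λD`, `M₀ = [[0,0,1],[0,0,0],[−1,0,0]]`, `D = diag(a₁,a₂,a₃)`,
if and only if `|x|² + |y|² + |z|² = 1`, `a₁|x|² + a₂|y|² + a₃|z|² = a₂` and
`x·conj(y)·z ∈ ℝ`. -/
theorem statement14 (a₁ a₂ a₃ : ℝ) (h12 : a₁ < a₂) (h23 : a₂ < a₃) (x y z : ℂ) :
    (∀ lam μ : ℂ,
      (!![0, z, y; -(starRingEnd ℂ) z, 0, x; -(starRingEnd ℂ) y, -(starRingEnd ℂ) x, 0]
          + lam • Matrix.diagonal ![(a₁ : ℂ), (a₂ : ℂ), (a₃ : ℂ)] - μ • 1).det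
        = (!![0, 0, 1; 0, 0, 0; -1, 0, 0]
            + lam • Matrix.diagonal ![(a₁ : ℂ), (a₂ : ℂ), (a₃ : ℂ)] - μ • 1).det)
      ↔ (‖x‖ ^ 2 + ‖y‖ ^ 2 + ‖z‖ ^ 2 = 1 ∧
          a₁ * ‖x‖ ^ 2 + a₂ * ‖y‖ ^ 2 + a₃ * ‖z‖ ^ 2 = a₂ ∧
          (x * (starRingEnd ℂ) y * z).im = 0) :=
  statement14_general a₁ a₂ a₃ x y z
end
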